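/- arXiv:2012.14047 — 6 statements merged into one kernel-verified Lean document; each statement's English description precedes it below -/
import Mathlib

section
/- (Lemma 2.5, main claim.) Let Δ be a simplicial complex on V that is pure of dimension r and all of whose facets are relevant, let σ ∈ Δ be a nonempty face, and let τ be a facet of link_σ(Δ). Then there are at most two subsets γ ⊆ τ with |γ| = |τ| − 1 such that σ ∪ γ is relevant (i.e., at most two codimension-one faces of τ are interior faces of link_σ(Δ)). -/
/-- If the image of `f` on `A` has exactly one fewer element than `A`, then at most two
elements of `A` share their `f`-value with another element of `A`. -/
lemma dup_card_le_two {V β : Type*} [DecidableEq V] [DecidableEq β]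
    (A : Finset V) (f : V → β) (h : (A.image f).card + 1 = A.card) :
    (A.filter fun v => ∃ w ∈ A, w ≠ v ∧ f w = f v).card ≤ 2 := by
  obtain ⟨a, ha, b, hb, hab, hfab⟩ :=
    Finset.exists_ne_map_eq_of_card_lt_of_maps_to (t := A.image f) (by omega)
      (fun x hx => Finset.mem_image_of_mem f hx)
  have hbea : b ∈ A.erase a := Finset.mem_erase.2 ⟨fun hh => hab hh.symm, hb⟩
  have himg : (A.erase a).image f = A.image f := by
    apply Finset.Subset.antisymm (Finset.image_subset_image (Finset.erase_subset a A))
    intro c hc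
    obtain ⟨v, hv, rfl⟩ := Finset.mem_image.1 hc
    by_cases hva : v = a
    · exact Finset.mem_image.2 ⟨b, hbea, by rw [← hfab, hva]⟩
    · exact Finset.mem_image.2 ⟨v, Finset.mem_erase.2 ⟨hva, hv⟩, rfl⟩
  have hinj : Set.InjOn f (A.erase a) := by
    apply Finset.injOn_of_card_image_eq
    rw [himg, Finset.card_erase_of_mem ha]
    omega
  have hsub : (A.filter fun v => ∃ w ∈ A, w ≠ v ∧ f w = f v) ⊆ {a, b} := by
    intro v hv
    obtain ⟨hvA, w, hwA, hwv, hfwv⟩ := Finset.mem_filter.1 hv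
    by_cases hva : v = a
    · simp [hva]
    by_cases hwa : w = a
    · have : v = b := hinj (Finset.mem_erase.2 ⟨hva, hvA⟩) hbea
        (by rw [← hfwv, hwa, hfab])
      simp [this]
    · exact absurd (hinj (Finset.mem_erase.2 ⟨hwa, hwA⟩) (Finset.mem_erase.2 ⟨hva, hvA⟩) hfwv)
        hwv
  calc (A.filter fun v => ∃ w ∈ A, w ≠ v ∧ f w = f v).card
      ≤ ({a, b} : Finset V).card := Finset.card_le_card hsub
    _ ≤ 2 := Finset.card_insert_le a {b} |>.trans (by simp)

/-- Lemma 2.5, main claim: if `Δ` is pure of dimension `r` with all facets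
relevant, `σ ∈ Δ` is a nonempty face and `τ` is a facet of `link_σ(Δ)`, then at most two
codimension-one faces `γ` of `τ` are interior, i.e. satisfy that `σ ∪ γ` is relevant. -/
theorem facet_link_at_most_two_interior {V : Type*} [DecidableEq V] {r : ℕ} (hr : 1 ≤ r)
    (col : V → Fin r) (Δ : Set (Finset V))
    (hdown : ∀ σ ∈ Δ, ∀ τ ⊆ σ, τ ∈ Δ)
    (hpure : ∀ τ ∈ Δ, (∀ σ ∈ Δ, τ ⊆ σ → τ = σ) → τ.card = r + 1)
    (hrel : ∀ τ ∈ Δ, (∀ σ ∈ Δ, τ ⊆ σ → τ = σ) → τ.image col = Finset.univ)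
    (σ : Finset V) (hσ : σ ∈ Δ) (hσne : σ.Nonempty)
    (τ : Finset V)
    (hτlink : τ ∈ Δ ∧ τ ∪ σ ∈ Δ ∧ τ ∩ σ = ∅)
    (hτfacet : ∀ γ : Finset V, (γ ∈ Δ ∧ γ ∪ σ ∈ Δ ∧ γ ∩ σ = ∅) → τ ⊆ γ → τ = γ) :
    (τ.powerset.filter fun γ =>
      γ.card = τ.card - 1 ∧ (σ ∪ γ).image col = Finset.univ).card ≤ 2 := by
  obtain ⟨hτΔ, hτσΔ, hτσdisj⟩ := hτlink
  set A : Finset V := τ ∪ σ with hA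
  -- A is a facet of Δ
  have hAfacet : ∀ ρ ∈ Δ, A ⊆ ρ → A = ρ := by
    intro ρ hρ hAρ
    have hσρ : σ ⊆ ρ := (Finset.subset_union_right).trans hAρ
    have hρσΔ : ρ \ σ ∈ Δ := hdown ρ hρ _ (Finset.sdiff_subset)
    have hρσu : (ρ \ σ) ∪ σ = ρ := Finset.sdiff_union_of_subset hσρ
    have hτsub : τ ⊆ ρ \ σ := by
      rw [Finset.subset_sdiff]
      exact ⟨(Finset.subset_union_left).trans hAρ, Finset.disjoint_iff_inter_eq_empty.2 hτσdisj⟩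
    have := hτfacet (ρ \ σ) ⟨hρσΔ, by rw [hρσu]; exact hρ, Finset.sdiff_inter_self σ ρ⟩ hτsub
    rw [hA, this, hρσu]
  have hcardA : A.card = r + 1 := hpure A hτσΔ hAfacet
  have himgA : A.image col = Finset.univ := hrel A hτσΔ hAfacet
  have hkey : (A.image col).card + 1 = A.card := by
    rw [himgA, hcardA, Finset.card_univ, Fintype.card_fin]
  have hD := dup_card_le_two A col hkey
  set D := A.filter fun v => ∃ w ∈ A, w ≠ v ∧ col w = col v with hDdef
  rcases τ.eq_empty_or_nonempty with hτe | hτne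
  · calc (τ.powerset.filter fun γ =>
        γ.card = τ.card - 1 ∧ (σ ∪ γ).image col = Finset.univ).card
        ≤ τ.powerset.card := Finset.card_filter_le _ _
      _ ≤ 2 := by rw [hτe]; simp
  · have hτpos : 1 ≤ τ.card := Finset.card_pos.2 hτne
    calc (τ.powerset.filter fun γ =>
        γ.card = τ.card - 1 ∧ (σ ∪ γ).image col = Finset.univ).card
        ≤ (D.image fun x => ({x} : Finset V)).card := by
          apply Finset.card_le_card_of_injOn (fun γ => τ \ γ)
          · intro γ hγ
            have hmem := Finset.mem_filter.1 hγ
            have hγpow : γ ⊆ τ := Finset.mem_powerset.1 hmem.1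
            have hγcard := hmem.2.1
            have hγrel := hmem.2.2
            have hsd : (τ \ γ).card = 1 := by
              rw [Finset.card_sdiff_of_subset hγpow]; omega
            obtain ⟨x, hx⟩ := Finset.card_eq_one.1 hsd
            have hxmem : x ∈ τ ∧ x ∉ γ := by
              have : x ∈ τ \ γ := by rw [hx]; exact Finset.mem_singleton_self x
              exact ⟨(Finset.mem_sdiff.1 this).1, (Finset.mem_sdiff.1 this).2⟩
            have hxσ : x ∉ σ := by
              intro hxs
              have : x ∈ τ ∩ σ := Finset.mem_inter.2 ⟨hxmem.1, hxs⟩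
              rw [hτσdisj] at this; exact absurd this (Finset.notMem_empty x)
            -- col x is attained on σ ∪ γ, giving a duplicate partner
            have : col x ∈ (σ ∪ γ).image col := by rw [hγrel]; exact Finset.mem_univ _
            obtain ⟨w, hw, hfw⟩ := Finset.mem_image.1 this
            have hwA : w ∈ A := by
              rcases Finset.mem_union.1 hw with h | h
              · exact Finset.mem_union.2 (Or.inr h)
              · exact Finset.mem_union.2 (Or.inl (hγpow h))
            have hwne : w ≠ x := by
              intro hwx
              rcases Finset.mem_union.1 hw with h | h
              · exact hxσ (hwx ▸ h)
              · exact hxmem.2 (hwx ▸ h)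
            have hxD : x ∈ D := Finset.mem_filter.2
              ⟨Finset.mem_union.2 (Or.inl hxmem.1), w, hwA, hwne, hfw⟩
            show τ \ γ ∈ (D.image fun x => ({x} : Finset V))
            rw [hx]
            exact Finset.mem_image.2 ⟨x, hxD, rfl⟩
          · intro γ₁ h₁ γ₂ h₂ hEq
            have hs₁ : γ₁ ⊆ τ := Finset.mem_powerset.1 (Finset.mem_filter.1 h₁).1
            have hs₂ : γ₂ ⊆ τ := Finset.mem_powerset.1 (Finset.mem_filter.1 h₂).1
            have := congrArg (fun s => τ \ s) hEq
            simpa [Finset.sdiff_sdiff_eq_self hs₁, Finset.sdiff_sdiff_eq_self hs₂] using this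
      _ ≤ D.card := Finset.card_image_le
      _ ≤ 2 := hD
end

section
/- (Lemma 2.5(3).) Let Δ be a simplicial complex on V that is pure of dimension r and all of whose facets are relevant, let σ ∈ Δ be a nonempty face, and let τ be a facet of link_σ(Δ). Then there are EXACTLY TWO subsets γ ⊆ τ with |γ| = |τ| − 1 and σ ∪ γ relevant if and only if some color appears at least twice among the vertices of τ. -/
/-! Since `τ` is a facet of the link of `σ`, the face `σ ∪ τ` is a facet of `Δ`, so its `r + 1`
vertices carry all `r` colours: exactly one colour `i₀` occurs twice, every other colour once.
As `τ` is disjoint from `σ`, `σ ∪ τ.erase v = (σ ∪ τ).erase v`, which is relevant iff `col v = i₀`.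
So the interior faces of `τ` correspond to the vertices of `τ` of colour `i₀`, and there are two
of them iff both `i₀`-coloured vertices lie in `τ`, i.e. iff some colour repeats in `τ`. -/

open Finset

namespace ColoredComplex

section Faces

variable {V : Type*} [DecidableEq V]

def link (Δ : Set (Finset V)) (σ : Finset V) : Set (Finset V) :=
  {γ | γ ∈ Δ ∧ γ ∪ σ ∈ Δ ∧ γ ∩ σ = ∅}

def IsFacet (Δ : Set (Finset V)) (τ : Finset V) : Prop :=
  τ ∈ Δ ∧ ∀ ρ ∈ Δ, τ ⊆ ρ → τ = ρ

theorem IsFacet.union_of_link {Δ : Set (Finset V)} (hdown : ∀ σ ∈ Δ, ∀ τ ⊆ σ, τ ∈ Δ)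
    {σ τ : Finset V} (h : IsFacet (link Δ σ) τ) : IsFacet Δ (σ ∪ τ) := by
  obtain ⟨⟨-, hτσ, hdisj⟩, hmax⟩ := h
  refine ⟨union_comm τ σ ▸ hτσ, fun ρ hρ hsub => ?_⟩
  have hσρ : σ ⊆ ρ := subset_union_left.trans hsub
  have hlink : ρ \ σ ∈ link Δ σ :=
    ⟨hdown ρ hρ _ sdiff_subset, by rwa [sdiff_union_of_subset hσρ], sdiff_inter_self _ _⟩
  have hτ : τ ⊆ ρ \ σ :=
    subset_sdiff.mpr ⟨subset_union_right.trans hsub, disjoint_iff_inter_eq_empty.mpr hdisj⟩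
  rw [hmax _ hlink hτ, union_sdiff_of_subset hσρ]

theorem filter_powerset_card_eq_sub_one {τ : Finset V} (hτ : τ.Nonempty) :
    {γ ∈ τ.powerset | #γ = #τ - 1} = τ.image τ.erase := by
  ext γ
  have hshadow := (mem_shadow_iff (𝒜 := {τ}) (t := γ)).symm.trans
    (mem_shadow_iff_exists_mem_card_add_one (𝒜 := {τ}) (t := γ))
  simp only [mem_singleton, exists_eq_left] at hshadow
  simp only [mem_filter, mem_powerset, mem_image, hshadow]
  have := hτ.card_pos
  exact and_congr_right fun _ => by omega

theorem card_filter_powerset_card_eq_sub_one {τ : Finset V} (hτ : τ.Nonempty)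
    (P : Finset V → Prop) [DecidablePred P] :
    #{γ ∈ τ.powerset | #γ = #τ - 1 ∧ P γ} = #{v ∈ τ | P (τ.erase v)} := by
  rw [← filter_filter, filter_powerset_card_eq_sub_one hτ, filter_image,
    card_image_of_injOn fun v hv w _ h => (erase_inj τ (mem_filter.mp hv).1).mp h]

end Faces

theorem exists_eq_one_of_sum_eq_one {ι : Type*} [Fintype ι] [DecidableEq ι] {g : ι → ℕ}
    (h : ∑ i, g i = 1) : ∃ i, g i = 1 ∧ ∀ j ≠ i, g j = 0 := by
  obtain ⟨i, -, hi⟩ := exists_ne_zero_of_sum_ne_zero (h ▸ one_ne_zero)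
  have hsplit := add_sum_erase univ g (mem_univ i)
  refine ⟨i, by omega, fun j hj => ?_⟩
  exact sum_eq_zero_iff.mp (by omega) j (mem_erase.mpr ⟨hj, mem_univ j⟩)

section Coloring

variable {V ι : Type*} [DecidableEq ι] (f : V → ι)

theorem image_erase_eq_image_iff [DecidableEq V] {s : Finset V} {v : V} (hv : v ∈ s) :
    (s.erase v).image f = s.image f ↔ 1 < #{w ∈ s | f w = f v} := by
  constructor
  · intro h
    obtain ⟨w, hw, hwv⟩ := mem_image.mp (h ▸ mem_image_of_mem f hv)
    exact one_lt_card.mpr ⟨w, mem_filter.mpr ⟨mem_of_mem_erase hw, hwv⟩, v,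
      mem_filter.mpr ⟨hv, rfl⟩, ne_of_mem_erase hw⟩
  · intro h
    obtain ⟨w, hw, hwv⟩ := exists_mem_ne h v
    refine (image_subset_image (erase_subset v s)).antisymm fun y hy => ?_
    obtain ⟨u, hu, rfl⟩ := mem_image.mp hy
    rcases eq_or_ne u v with rfl | huv
    · exact mem_image.mpr ⟨w, mem_erase.mpr ⟨hwv, (mem_filter.mp hw).1⟩, (mem_filter.mp hw).2⟩
    · exact mem_image_of_mem f (mem_erase.mpr ⟨huv, hu⟩)

theorem exists_card_fiber_eq_two [Fintype ι] {s : Finset V} (hcard : #s = Fintype.card ι + 1)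
    (hsurj : s.image f = univ) :
    ∃ i, #{v ∈ s | f v = i} = 2 ∧ ∀ j ≠ i, #{v ∈ s | f v = j} = 1 := by
  have hpos j : 1 ≤ #{v ∈ s | f v = j} :=
    card_pos.mpr (fiber_nonempty_iff_mem_image.mpr (hsurj ▸ mem_univ j))
  have hsum : ∑ j, #{v ∈ s | f v = j} = Fintype.card ι + 1 :=
    hcard ▸ (card_eq_sum_card_fiberwise fun v _ => mem_univ (f v)).symm
  have hexcess : ∑ j, (#{v ∈ s | f v = j} - 1) = 1 := by
    rw [sum_tsub_distrib _ fun j _ => hpos j, hsum]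
    simp
  obtain ⟨i, hi, hj⟩ := exists_eq_one_of_sum_eq_one hexcess
  exact ⟨i, by omega, fun j hne => by have := hj j hne; have := hpos j; omega⟩

theorem exists_two_le_card_fiber_iff {s t : Finset V} (hts : t ⊆ s) {i : ι}
    (htwo : #{v ∈ s | f v = i} = 2) (hone : ∀ j ≠ i, #{v ∈ s | f v = j} = 1) :
    (∃ j, 2 ≤ #{v ∈ t | f v = j}) ↔ #{v ∈ t | f v = i} = 2 := by
  have hle j : #{v ∈ t | f v = j} ≤ #{v ∈ s | f v = j} :=
    card_le_card (filter_subset_filter _ hts)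
  refine ⟨?_, fun h => ⟨i, h.ge⟩⟩
  rintro ⟨j, hj⟩
  have hji : j = i := by
    by_contra hne
    have := hle j
    rw [hone j hne] at this
    omega
  subst hji
  exact le_antisymm ((hle j).trans htwo.le) hj

end Coloring

end ColoredComplex

open ColoredComplex

theorem facet_link_two_interior_iff_general {V : Type*} [DecidableEq V] {r : ℕ}
    (col : V → Fin r) (Δ : Set (Finset V))
    (hdown : ∀ σ ∈ Δ, ∀ τ ⊆ σ, τ ∈ Δ)
    (hpure : ∀ τ ∈ Δ, (∀ σ ∈ Δ, τ ⊆ σ → τ = σ) → τ.card = r + 1)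
    (hrel : ∀ τ ∈ Δ, (∀ σ ∈ Δ, τ ⊆ σ → τ = σ) → τ.image col = Finset.univ)
    (σ : Finset V)
    (τ : Finset V)
    (hτlink : τ ∈ Δ ∧ τ ∪ σ ∈ Δ ∧ τ ∩ σ = ∅)
    (hτfacet : ∀ γ : Finset V, (γ ∈ Δ ∧ γ ∪ σ ∈ Δ ∧ γ ∩ σ = ∅) → τ ⊆ γ → τ = γ) :
    (τ.powerset.filter fun γ =>
        γ.card = τ.card - 1 ∧ (σ ∪ γ).image col = Finset.univ).card = 2 ↔
      ∃ i : Fin r, 2 ≤ (τ.filter fun v => col v = i).card := by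
  have hs : IsFacet Δ (σ ∪ τ) := IsFacet.union_of_link hdown ⟨hτlink, hτfacet⟩
  have hcover := hrel _ hs.1 hs.2
  obtain ⟨i₀, htwo, hone⟩ :=
    exists_card_fiber_eq_two col (by simpa using hpure _ hs.1 hs.2) hcover
  rcases τ.eq_empty_or_nonempty with rfl | hτ
  · -- `#∅ - 1 = 0`, so `∅` is its own unique codimension-one face
    simp only [powerset_empty, filter_singleton]
    split_ifs <;> simp
  have hinterior : ∀ v ∈ τ, (σ ∪ τ.erase v).image col = univ ↔ col v = i₀ := by
    intro v hv
    have hvσ : v ∉ σ := disjoint_left.mp (disjoint_iff_inter_eq_empty.mpr hτlink.2.2) hv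
    rw [← erase_eq_of_notMem hvσ, ← erase_union_distrib, ← hcover,
      image_erase_eq_image_iff col (mem_union_right σ hv)]
    by_cases h : col v = i₀
    · simp [h, htwo]
    · simp [h, hone _ h]
  rw [card_filter_powerset_card_eq_sub_one hτ, filter_congr hinterior,
    exists_two_le_card_fiber_iff col subset_union_right htwo hone]

/-- Lemma 2.5(3): with `Δ` pure of dimension `r`, all facets relevant,
`σ ∈ Δ` nonempty and `τ` a facet of `link_σ(Δ)`, there are EXACTLY TWO codimension-one faces `γ` of
`τ` with `σ ∪ γ` relevant if and only if some color appears at least twice in `τ`. -/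
theorem facet_link_two_interior_iff {V : Type*} [DecidableEq V] {r : ℕ} (hr : 1 ≤ r)
    (col : V → Fin r) (Δ : Set (Finset V))
    (hdown : ∀ σ ∈ Δ, ∀ τ ⊆ σ, τ ∈ Δ)
    (hpure : ∀ τ ∈ Δ, (∀ σ ∈ Δ, τ ⊆ σ → τ = σ) → τ.card = r + 1)
    (hrel : ∀ τ ∈ Δ, (∀ σ ∈ Δ, τ ⊆ σ → τ = σ) → τ.image col = Finset.univ)
    (σ : Finset V) (hσ : σ ∈ Δ) (hσne : σ.Nonempty)
    (τ : Finset V)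
    (hτlink : τ ∈ Δ ∧ τ ∪ σ ∈ Δ ∧ τ ∩ σ = ∅)
    (hτfacet : ∀ γ : Finset V, (γ ∈ Δ ∧ γ ∪ σ ∈ Δ ∧ γ ∩ σ = ∅) → τ ⊆ γ → τ = γ) :
    (τ.powerset.filter fun γ =>
        γ.card = τ.card - 1 ∧ (σ ∪ γ).image col = Finset.univ).card = 2 ↔
      ∃ i : Fin r, 2 ≤ (τ.filter fun v => col v = i).card :=
  facet_link_two_interior_iff_general col Δ hdown hpure hrel σ τ hτlink hτfacet
end

section
/- (Lemma 2.2, link part.) Assume every color class col⁻¹(i) has at least two elements. Let σ ∈ B_r be a nonempty face such that for every color i ∈ {1,…,r} there is a vertex of color i not belonging to σ. Then the reduced simplicial homology of the link satisfies H̃_j(link_σ(B_r); k) = 0 for every integer j with −1 ≤ j < r − |σ| (in particular for all j below the dimension r − 1 − dim σ of link_σ(B_r)). -/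
/-- `BrFaces col` is the simplicial complex `B_r` of all irrelevant faces of dimension at
most `r`, i.e. faces with at most `r + 1` vertices not using all `r` colors. -/
def BrFaces {V : Type*} [DecidableEq V] {r : ℕ} (col : V → Fin r) (s : Finset V) : Prop :=
  s.card ≤ r + 1 ∧ s.image col ≠ Finset.univ

/-- The link of a face `σ` in a simplicial complex `Δ` (given as a predicate on finite
sets of vertices): the faces `γ ∈ Δ` with `γ ∪ σ ∈ Δ` and `γ ∩ σ = ∅`. -/
def linkFaces {V : Type*} [DecidableEq V] (Δ : Finset V → Prop) (σ : Finset V)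
    (γ : Finset V) : Prop :=
  Δ γ ∧ Δ (γ ∪ σ) ∧ γ ∩ σ = ∅

/-- The degree-`m` term of the augmented simplicial chain complex of `Δ` with
coefficients in `k`: the free `k`-vector space on the (finitely many) faces of `Δ` with
`m` vertices, realized as functions on these faces.  Chain degree `m` corresponds to
reduced homological degree `m - 1`, so the empty face sits in chain degree `0`. -/
abbrev simplicialChains (k : Type*) [Field k] {V : Type*} (Δ : Finset V → Prop)
    (m : ℕ) : Type _ :=
  {s : Finset V // Δ s ∧ s.card = m} → k

open scoped Classical in
/-- The simplicial boundary map of the augmented chain complex of `Δ`, from chain degree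
`m + 1` to chain degree `m`, given on a face `s` by the alternating sum (relative to the
linear order on the vertices) of the faces obtained by deleting one vertex of `s`. -/
noncomputable def simplicialBoundary (k : Type*) [Field k] {V : Type*} [Fintype V]
    [LinearOrder V] (Δ : Finset V → Prop) (m : ℕ) :
    simplicialChains k Δ (m + 1) →ₗ[k] simplicialChains k Δ m :=
  LinearMap.lsum k (fun _ => k) k fun s =>
    LinearMap.toSpanSingleton k (simplicialChains k Δ m)
      (∑ v ∈ s.1.attach,
        if h : Δ (s.1.erase v.1) then
          ((-1 : k) ^ (s.1.filter (· < v.1)).card) •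
            Pi.single (M := fun _ => k)
              (⟨s.1.erase v.1, ⟨h, by simp [Finset.card_erase_of_mem v.2, s.2.2]⟩⟩ :
                {s : Finset V // Δ s ∧ s.card = m}) (1 : k)
        else 0)

/-!
Pick `v ∈ σ` and `w ∉ σ` of the same color. If `γ` is a face of `link_σ(B_r)` with
`|γ| + |σ| ≤ r`, then so is `γ ∪ {w}`: the new vertex brings no new color and the size stays at
most `r + 1`. So in the degrees in question the link is a cone with apex `w`, and the cone
operator `h : t ↦ ±(t ∪ {w})` is a contraction: `∂h + h∂ = id` on chains of faces with at most
`r - |σ|` vertices, and `∂h = id` on the augmentation degree.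
-/

open Finset

section IncidenceSign

variable {V : Type*} [LinearOrder V] (R : Type*) [CommRing R]

def incidenceSign (t : Finset V) (v : V) : R := (-1) ^ #(t.filter (· < v))

variable {R}

theorem incidenceSign_erase_of_not_lt {t : Finset V} {u v : V} (h : ¬v < u) :
    incidenceSign R (t.erase v) u = incidenceSign R t u := by
  rw [incidenceSign, incidenceSign, filter_erase, erase_eq_of_notMem]
  simp [h]

theorem incidenceSign_erase_of_lt {t : Finset V} {u v : V} (hv : v ∈ t) (h : v < u) :
    incidenceSign R (t.erase v) u = -incidenceSign R t u := by
  rw [incidenceSign, incidenceSign, filter_erase,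
    ← card_erase_add_one (mem_filter.2 ⟨hv, h⟩), pow_succ, mul_neg_one, neg_neg]

theorem incidenceSign_insert_of_not_lt {t : Finset V} {u v : V} (h : ¬u < v) :
    incidenceSign R (insert u t) v = incidenceSign R t v := by
  rw [incidenceSign, incidenceSign, filter_insert, if_neg h]

theorem incidenceSign_insert_of_lt {t : Finset V} {u v : V} (hu : u ∉ t) (h : u < v) :
    incidenceSign R (insert u t) v = -incidenceSign R t v := by
  rw [incidenceSign, incidenceSign, filter_insert, if_pos h,
    card_insert_of_notMem fun hu' => hu (mem_filter.1 hu').1, pow_succ, mul_neg_one]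

theorem incidenceSign_mul_self (t : Finset V) (v : V) :
    incidenceSign R t v * incidenceSign R t v = 1 := by
  rw [incidenceSign, ← pow_add, Even.neg_one_pow ⟨_, rfl⟩]

theorem incidenceSign_erase_add_incidenceSign_erase {t : Finset V} {u v : V} (hu : u ∈ t)
    (hv : v ∈ t) (huv : u ≠ v) :
    incidenceSign R t v * incidenceSign R (t.erase v) u
      + incidenceSign R t u * incidenceSign R (t.erase u) v = 0 := by
  rcases huv.lt_or_gt with h | h
  · rw [incidenceSign_erase_of_not_lt h.asymm, incidenceSign_erase_of_lt hu h]; ring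
  · rw [incidenceSign_erase_of_lt hv h, incidenceSign_erase_of_not_lt h.asymm]; ring

theorem incidenceSign_insert_add_incidenceSign_erase {t : Finset V} {v w : V} (hv : v ∈ t)
    (hw : w ∉ t) :
    incidenceSign R t w * incidenceSign R (insert w t) v
      + incidenceSign R t v * incidenceSign R (t.erase v) w = 0 := by
  rcases (ne_of_mem_of_not_mem hv hw).symm.lt_or_gt with h | h
  · rw [incidenceSign_insert_of_lt hw h, incidenceSign_erase_of_not_lt h.asymm]; ring
  · rw [incidenceSign_insert_of_not_lt h.asymm, incidenceSign_erase_of_lt hv h]; ring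

end IncidenceSign

theorem lsum_toSpanSingleton_single_one {R ι M : Type*} [CommSemiring R] [Fintype ι]
    [DecidableEq ι] [AddCommMonoid M] [Module R M] (f : ι → M) (i : ι) :
    LinearMap.lsum R (fun _ => R) R (fun j => LinearMap.toSpanSingleton R M (f j))
      (Pi.single i 1) = f i := by
  simp [Pi.single_apply]

section SimplicialChains

open scoped Classical

variable {V : Type*} [LinearOrder V] (k : Type*) [Field k] (Δ : Finset V → Prop)

/-- This is `0` unless `t` is a face of `Δ` with `m` vertices. -/
noncomputable def faceChain (m : ℕ) (t : Finset V) : simplicialChains k Δ m :=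
  fun u => if u.1 = t then 1 else 0

variable {k Δ}

theorem single_one_eq_faceChain {m : ℕ} (u : {s : Finset V // Δ s ∧ #s = m}) :
    (Pi.single u 1 : simplicialChains k Δ m) = faceChain k Δ m u.1 := by
  funext u'
  simp [Pi.single_apply, faceChain, Subtype.ext_iff]

theorem erase_of_isLowerSet (hΔ : IsLowerSet {s | Δ s}) {t : Finset V} (ht : Δ t) (v : V) :
    Δ (t.erase v) :=
  hΔ (erase_subset v t) ht

variable [Fintype V]

variable (k Δ) in
noncomputable def coneMap (w : V) (m : ℕ) :
    simplicialChains k Δ m →ₗ[k] simplicialChains k Δ (m + 1) :=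
  LinearMap.lsum k (fun _ => k) k fun s =>
    LinearMap.toSpanSingleton k (simplicialChains k Δ (m + 1))
      (if w ∈ s.1 then 0 else incidenceSign k s.1 w • faceChain k Δ (m + 1) (insert w s.1))

theorem simplicialBoundary_faceChain (hΔ : IsLowerSet {s | Δ s}) {m : ℕ} {t : Finset V}
    (ht : Δ t) (hc : #t = m + 1) :
    simplicialBoundary k Δ m (faceChain k Δ (m + 1) t) =
      ∑ v ∈ t, incidenceSign k t v • faceChain k Δ m (t.erase v) := by
  rw [← single_one_eq_faceChain ⟨t, ht, hc⟩, simplicialBoundary, lsum_toSpanSingleton_single_one,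
    ← sum_attach t]
  refine sum_congr rfl fun v _ => ?_
  rw [dif_pos (erase_of_isLowerSet hΔ ht v), single_one_eq_faceChain]
  rfl

theorem coneMap_faceChain (w : V) {m : ℕ} {t : Finset V} (ht : Δ t) (hc : #t = m) :
    coneMap k Δ w m (faceChain k Δ m t) =
      if w ∈ t then 0 else incidenceSign k t w • faceChain k Δ (m + 1) (insert w t) := by
  rw [← single_one_eq_faceChain ⟨t, ht, hc⟩, coneMap, lsum_toSpanSingleton_single_one]

theorem simplicialBoundary_simplicialBoundary_faceChain (hΔ : IsLowerSet {s | Δ s}) {m : ℕ}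
    {t : Finset V} (ht : Δ t) (hc : #t = m + 2) :
    simplicialBoundary k Δ m (simplicialBoundary k Δ (m + 1) (faceChain k Δ (m + 2) t)) = 0 := by
  have hpair : ∀ v ∈ t, simplicialBoundary k Δ m
      (incidenceSign k t v • faceChain k Δ (m + 1) (t.erase v)) =
        ∑ u ∈ t.erase v, (incidenceSign k t v * incidenceSign k (t.erase v) u) •
          faceChain k Δ m ((t.erase v).erase u) := by
    intro v hv
    rw [map_smul, simplicialBoundary_faceChain hΔ (erase_of_isLowerSet hΔ ht v)
      (by rw [card_erase_of_mem hv, hc]; rfl), smul_sum]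
    simp only [smul_smul]
  rw [simplicialBoundary_faceChain hΔ ht hc, map_sum, sum_congr rfl hpair, sum_sigma']
  refine sum_involution (fun p _ => ⟨p.2, p.1⟩) ?_ ?_ ?_ (fun _ _ => rfl)
  · rintro ⟨v, u⟩ hp
    obtain ⟨hv, hu⟩ := mem_sigma.1 hp
    rw [erase_right_comm, ← add_smul, incidenceSign_erase_add_incidenceSign_erase
      (mem_of_mem_erase hu) hv (ne_of_mem_erase hu), zero_smul]
  · rintro ⟨v, u⟩ hp _ h
    exact ne_of_mem_erase (mem_sigma.1 hp).2 (congrArg Sigma.fst h)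
  · rintro ⟨v, u⟩ hp
    obtain ⟨hv, hu⟩ := mem_sigma.1 hp
    exact mem_sigma.2 ⟨mem_of_mem_erase hu, mem_erase.2 ⟨(ne_of_mem_erase hu).symm, hv⟩⟩

theorem simplicialBoundary_comp_simplicialBoundary (hΔ : IsLowerSet {s | Δ s}) (m : ℕ) :
    simplicialBoundary k Δ m ∘ₗ simplicialBoundary k Δ (m + 1) = 0 :=
  (Pi.basisFun k _).ext fun u => by
    rw [Pi.basisFun_apply, LinearMap.comp_apply, single_one_eq_faceChain,
      simplicialBoundary_simplicialBoundary_faceChain hΔ u.2.1 u.2.2, LinearMap.zero_apply]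

theorem coneMap_simplicialBoundary_faceChain (hΔ : IsLowerSet {s | Δ s}) (w : V) {m : ℕ}
    {t : Finset V} (ht : Δ t) (hc : #t = m + 1) :
    coneMap k Δ w m (simplicialBoundary k Δ m (faceChain k Δ (m + 1) t)) =
      ∑ v ∈ t, if w ∈ t.erase v then 0 else
        (incidenceSign k t v * incidenceSign k (t.erase v) w) •
          faceChain k Δ (m + 1) (insert w (t.erase v)) := by
  rw [simplicialBoundary_faceChain hΔ ht hc, map_sum]
  refine sum_congr rfl fun v hv => ?_
  rw [map_smul, coneMap_faceChain w (erase_of_isLowerSet hΔ ht v)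
    (by rw [card_erase_of_mem hv, hc]; rfl)]
  split_ifs <;> simp only [smul_zero, smul_smul]

theorem simplicialBoundary_coneMap_add_coneMap_simplicialBoundary_faceChain
    (hΔ : IsLowerSet {s | Δ s}) {w : V} {m : ℕ} {t : Finset V} (ht : Δ t) (hc : #t = m + 1)
    (hcone : Δ (insert w t)) :
    simplicialBoundary k Δ (m + 1) (coneMap k Δ w (m + 1) (faceChain k Δ (m + 1) t)) +
      coneMap k Δ w m (simplicialBoundary k Δ m (faceChain k Δ (m + 1) t)) =
        faceChain k Δ (m + 1) t := by
  rw [coneMap_faceChain w ht hc, coneMap_simplicialBoundary_faceChain hΔ w ht hc]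
  by_cases hw : w ∈ t
  · rw [if_pos hw, map_zero, zero_add, sum_eq_single_of_mem w hw
      fun v _ hvw => if_pos (mem_erase.2 ⟨hvw.symm, hw⟩),
      if_neg (notMem_erase w t), insert_erase hw,
      incidenceSign_erase_of_not_lt (lt_irrefl w), incidenceSign_mul_self, one_smul]
  · rw [if_neg hw, map_smul, simplicialBoundary_faceChain hΔ hcone
      (by rw [card_insert_of_notMem hw, hc]), sum_insert hw, erase_insert hw, smul_add,
      smul_smul, incidenceSign_insert_of_not_lt (lt_irrefl w), incidenceSign_mul_self, one_smul,
      add_assoc, smul_sum, ← sum_add_distrib, add_eq_left]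
    refine sum_eq_zero fun v hv => ?_
    rw [if_neg fun h => hw (mem_of_mem_erase h),
      erase_insert_of_ne (ne_of_mem_of_not_mem hv hw).symm, smul_smul, ← add_smul,
      incidenceSign_insert_add_incidenceSign_erase hv hw, zero_smul]

theorem simplicialBoundary_comp_coneMap_add_coneMap_comp_simplicialBoundary
    (hΔ : IsLowerSet {s | Δ s}) {w : V} {m : ℕ}
    (hcone : ∀ t, Δ t → #t = m + 1 → Δ (insert w t)) :
    simplicialBoundary k Δ (m + 1) ∘ₗ coneMap k Δ w (m + 1) +
      coneMap k Δ w m ∘ₗ simplicialBoundary k Δ m = LinearMap.id :=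
  (Pi.basisFun k _).ext fun u => by
    rw [Pi.basisFun_apply, LinearMap.add_apply, LinearMap.comp_apply, LinearMap.comp_apply,
      single_one_eq_faceChain, LinearMap.id_apply,
      simplicialBoundary_coneMap_add_coneMap_simplicialBoundary_faceChain hΔ u.2.1 u.2.2
        (hcone _ u.2.1 u.2.2)]

theorem simplicialBoundary_zero_comp_coneMap_zero (hΔ : IsLowerSet {s | Δ s}) {w : V}
    (hw : Δ {w}) : simplicialBoundary k Δ 0 ∘ₗ coneMap k Δ w 0 = LinearMap.id :=
  (Pi.basisFun k _).ext fun u => by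
    obtain ⟨t, ht, hc⟩ := u
    obtain rfl : t = ∅ := card_eq_zero.1 hc
    rw [Pi.basisFun_apply, LinearMap.comp_apply, single_one_eq_faceChain, LinearMap.id_apply,
      coneMap_faceChain w ht hc, if_neg (notMem_empty w), insert_empty, map_smul,
      simplicialBoundary_faceChain hΔ hw (card_singleton w), sum_singleton, erase_singleton]
    simp [incidenceSign, filter_singleton]

theorem ker_simplicialBoundary_eq_range_of_cone (hΔ : IsLowerSet {s | Δ s}) {w : V} {m : ℕ}
    (hcone : ∀ t, Δ t → #t = m + 1 → Δ (insert w t)) :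
    LinearMap.ker (simplicialBoundary k Δ m) =
      LinearMap.range (simplicialBoundary k Δ (m + 1)) := by
  refine le_antisymm (fun x hx => ⟨coneMap k Δ w (m + 1) x, ?_⟩)
    (LinearMap.range_le_ker_iff.2 (simplicialBoundary_comp_simplicialBoundary hΔ m))
  have := LinearMap.congr_fun
    (simplicialBoundary_comp_coneMap_add_coneMap_comp_simplicialBoundary hΔ hcone) x
  rwa [LinearMap.add_apply, LinearMap.comp_apply, LinearMap.comp_apply, LinearMap.mem_ker.1 hx,
    map_zero, add_zero] at this

theorem range_simplicialBoundary_zero_eq_top (hΔ : IsLowerSet {s | Δ s}) {w : V}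
    (hw : Δ {w}) : LinearMap.range (simplicialBoundary k Δ 0) = ⊤ :=
  LinearMap.range_eq_top_of_surjective _ fun x =>
    ⟨coneMap k Δ w 0 x, LinearMap.congr_fun (simplicialBoundary_zero_comp_coneMap_zero hΔ hw) x⟩

end SimplicialChains

section LinkOfBr

variable {V : Type*} [DecidableEq V]

theorem isLowerSet_linkFaces {Δ : Finset V → Prop} (hΔ : IsLowerSet {s | Δ s}) (σ : Finset V) :
    IsLowerSet {s | linkFaces Δ σ s} := fun _ _ hst hs =>
  ⟨hΔ hst hs.1, hΔ (union_subset_union hst subset_rfl) hs.2.1,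
    subset_empty.1 ((inter_subset_inter hst subset_rfl).trans (subset_empty.2 hs.2.2))⟩

theorem linkFaces_empty {Δ : Finset V → Prop} (hΔ : IsLowerSet {s | Δ s}) {σ : Finset V}
    (hσ : Δ σ) : linkFaces Δ σ ∅ :=
  ⟨hΔ (empty_subset σ) hσ, by rwa [empty_union], empty_inter σ⟩

variable {r : ℕ} {col : V → Fin r}

theorem isLowerSet_BrFaces (col : V → Fin r) : IsLowerSet {s | BrFaces col s} := fun _ _ hst hs =>
  ⟨(card_le_card hst).trans hs.1, fun h => hs.2 (univ_subset_iff.1 (h ▸ image_subset_image hst))⟩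

theorem BrFaces.insert {s : Finset V} (hs : BrFaces col s) (hcard : #s ≤ r) {w : V}
    (hw : col w ∈ s.image col) : BrFaces col (insert w s) :=
  ⟨(card_insert_le w s).trans (by omega), by rw [image_insert, insert_eq_of_mem hw]; exact hs.2⟩

theorem linkFaces_BrFaces_insert {σ γ : Finset V} {v w : V} (hv : v ∈ σ) (hwv : col w = col v)
    (hw : w ∉ σ) (hγ : linkFaces (BrFaces col) σ γ) (hcard : #γ + #σ ≤ r) :
    linkFaces (BrFaces col) σ (insert w γ) := by
  have hunion : BrFaces col (insert w γ ∪ σ) := by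
    rw [insert_union]
    exact hγ.2.1.insert ((card_union_le γ σ).trans hcard)
      (hwv ▸ mem_image_of_mem col (mem_union_right γ hv))
  exact ⟨isLowerSet_BrFaces col subset_union_left hunion, hunion,
    by rw [insert_inter_of_notMem hw, hγ.2.2]⟩

end LinkOfBr

/-- Reduced degree `j` is chain degree `j + 1`: the first conjunct is `j = -1`, the second
`j = m ≥ 0`. -/
theorem reduced_homology_link_Br_vanishes_general {V : Type*} [Fintype V] [LinearOrder V]
    (k : Type*) [Field k] {r : ℕ} (col : V → Fin r)
    (σ : Finset V) (hσ : BrFaces col σ) (hσne : σ.Nonempty)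
    (hout : ∀ i : Fin r, ∃ v : V, col v = i ∧ v ∉ σ) :
    ((0 : ℤ) ≤ (r : ℤ) - (σ.card : ℤ) →
      LinearMap.range (simplicialBoundary k (linkFaces (BrFaces col) σ) 0) = ⊤) ∧
    (∀ m : ℕ, (m : ℤ) + 1 ≤ (r : ℤ) - (σ.card : ℤ) →
      LinearMap.ker (simplicialBoundary k (linkFaces (BrFaces col) σ) m) =
        LinearMap.range (simplicialBoundary k (linkFaces (BrFaces col) σ) (m + 1))) := by
  obtain ⟨v, hv⟩ := hσne
  obtain ⟨w, hwv, hw⟩ := hout (col v)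
  have hΔ := isLowerSet_linkFaces (isLowerSet_BrFaces col) σ
  have hcone (γ : Finset V) : linkFaces (BrFaces col) σ γ → #γ + #σ ≤ r →
      linkFaces (BrFaces col) σ (insert w γ) :=
    linkFaces_BrFaces_insert hv hwv hw
  refine ⟨fun hσr => range_simplicialBoundary_zero_eq_top hΔ (w := w) ?_,
    fun m hm => ker_simplicialBoundary_eq_range_of_cone hΔ fun t ht hc => hcone t ht (by omega)⟩
  simpa using hcone ∅ (linkFaces_empty (isLowerSet_BrFaces col) hσ) (by simp; omega)

/-- Lemma 2.2, link part: if every color class has at least two elements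
and `σ ∈ B_r` is a nonempty face such that every color has a vertex outside `σ`, then the
reduced simplicial homology `H̃_j(link_σ(B_r); k)` vanishes for all `-1 ≤ j < r - |σ|`.
Reduced degree `j` corresponds to chain degree `m = j + 1` of the augmented complex: the
`j = -1` case is the first conjunct, and the case `j = m ≥ 0` is the second conjunct. -/
theorem reduced_homology_link_Br_vanishes {V : Type*} [Fintype V] [LinearOrder V]
    (k : Type*) [Field k] {r : ℕ} (hr : 1 ≤ r) (col : V → Fin r)
    (hcol : ∀ i : Fin r, 2 ≤ (Finset.univ.filter fun v => col v = i).card)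
    (σ : Finset V) (hσ : BrFaces col σ) (hσne : σ.Nonempty)
    (hout : ∀ i : Fin r, ∃ v : V, col v = i ∧ v ∉ σ) :
    ((0 : ℤ) ≤ (r : ℤ) - (σ.card : ℤ) →
      LinearMap.range (simplicialBoundary k (linkFaces (BrFaces col) σ) 0) = ⊤) ∧
    (∀ m : ℕ, (m : ℤ) + 1 ≤ (r : ℤ) - (σ.card : ℤ) →
      LinearMap.ker (simplicialBoundary k (linkFaces (BrFaces col) σ) m) =
        LinearMap.range (simplicialBoundary k (linkFaces (BrFaces col) σ) (m + 1))) :=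
  reduced_homology_link_Br_vanishes_general k col σ hσ hσne hout
end

section
/- (Lemma 2.2, global part.) Assume every color class col⁻¹(i) has at least two elements, and let k be a field. Then the reduced simplicial homology of the complex B_r of all irrelevant faces of dimension at most r satisfies H̃_{r−2}(B_r; k) ≅ k, and H̃_j(B_r; k) = 0 for every integer j with j < r and j ≠ r − 2. -/
set_option linter.unusedSectionVars false
section Dev
open Classical Finset

variable {V : Type*} [Fintype V] [LinearOrder V] (k : Type*) [Field k]
variable {r : ℕ} (col : V → Fin r)

/-- index type of degree-`m` faces -/
abbrev Idx (m : ℕ) := {s : Finset V // BrFaces col s ∧ s.card = m}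

lemma brFaces_mono {s t : Finset V} (hst : s ⊆ t) (ht : BrFaces col t) : BrFaces col s := by
  refine ⟨le_trans (Finset.card_le_card hst) ht.1, fun h => ht.2 ?_⟩
  have : s.image col ⊆ t.image col := Finset.image_subset_image hst
  rw [h] at this
  exact Finset.univ_subset_iff.mp this

lemma brFaces_of_card_lt {s : Finset V} (h : s.card < r) : BrFaces col s := by
  refine ⟨by omega, fun hu => ?_⟩
  have h1 : (s.image col).card ≤ s.card := Finset.card_image_le
  rw [hu] at h1
  simp [Finset.card_univ] at h1
  omega

open Classical in
/-- basis chain supported on face `t` (zero if `t` is not a valid face) -/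
noncomputable def Ee (m : ℕ) (t : Finset V) : simplicialChains k (BrFaces col) m :=
  if h : BrFaces col t ∧ t.card = m then Pi.single (⟨t, h⟩ : Idx col m) 1 else 0

lemma Ee_apply (m : ℕ) (t : Finset V) (u : Idx col m) :
    Ee k col m t u = if u.1 = t then 1 else 0 := by
  unfold Ee
  split_ifs with h h2 h3
  · rw [show u = ⟨t, h⟩ from Subtype.ext h2]; simp
  · rw [Pi.single_apply, if_neg]
    intro hh; exact h2 (congrArg Subtype.val hh)
  · exact absurd (h3 ▸ u.2) h
  · rfl

lemma Ee_valid (m : ℕ) (t : Finset V) (h : BrFaces col t ∧ t.card = m) :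
    Ee k col m t = Pi.single (⟨t, h⟩ : Idx col m) 1 := dif_pos h

lemma chain_expand {m : ℕ} (z : simplicialChains k (BrFaces col) m) :
    z = ∑ t : Idx col m, z t • Ee k col m t.1 := by
  funext u
  rw [Finset.sum_apply]
  rw [Finset.sum_eq_single u]
  · simp [Ee_apply]
  · intro t _ ht
    simp [Ee_apply, smul_eq_mul]
    intro h; exact absurd (Subtype.ext h).symm ht
  · intro h; exact absurd (Finset.mem_univ u) h

lemma boundary_single (m : ℕ) (s : Finset V) (hb : BrFaces col s) (hc : s.card = m + 1) :
    simplicialBoundary k (BrFaces col) m (Ee k col (m+1) s) =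
      ∑ v ∈ s, ((-1 : k) ^ (s.filter (· < v)).card) • Ee k col m (s.erase v) := by
  rw [Ee_valid k col (m+1) s ⟨hb, hc⟩]
  unfold simplicialBoundary
  rw [LinearMap.lsum_apply, LinearMap.sum_apply]
  rw [Finset.sum_eq_single (⟨s, hb, hc⟩ : Idx col (m+1))]
  · rw [LinearMap.comp_apply, LinearMap.proj_apply, Pi.single_eq_same,
      LinearMap.toSpanSingleton_apply_one]
    rw [← Finset.sum_attach s (fun v => ((-1 : k) ^ (s.filter (· < v)).card) • Ee k col m (s.erase v))]
    refine Finset.sum_congr rfl (fun v _ => ?_)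
    rw [dif_pos (brFaces_mono col (Finset.erase_subset _ _) hb)]
    rw [Ee_valid]
  · intro t _ ht
    rw [LinearMap.comp_apply, LinearMap.proj_apply, Pi.single_eq_of_ne ht, map_zero]
  · intro h; exact absurd (Finset.mem_univ _) h


lemma filter_card_erase {s : Finset V} {v : V} (hv : v ∈ s) (w : V) :
    (s.filter (· < w)).card = ((s.erase v).filter (· < w)).card + if v < w then 1 else 0 := by
  rw [Finset.filter_erase]
  split_ifs with h
  · have hm : v ∈ s.filter (· < w) := Finset.mem_filter.mpr ⟨hv, h⟩
    rw [Finset.card_erase_of_mem hm]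
    have : 0 < (s.filter (· < w)).card := Finset.card_pos.mpr ⟨v, hm⟩
    omega
  · have hm : v ∉ s.filter (· < w) := fun hm => h (Finset.mem_filter.mp hm).2
    rw [Finset.erase_eq_of_notMem hm, Nat.add_zero]

lemma filter_card_insert {s : Finset V} {a : V} (ha : a ∉ s) (w : V) :
    ((insert a s).filter (· < w)).card = (s.filter (· < w)).card + if a < w then 1 else 0 := by
  have := filter_card_erase (s := insert a s) (v := a) (Finset.mem_insert_self a s) w
  rwa [Finset.erase_insert ha] at this

/-- generic pairwise cancellation -/
lemma pair_cancel {N : Type*} [AddCommGroup N] [Module k N] (s : Finset V)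
    (M : Finset V → N) :
    ∑ b ∈ s, ∑ v ∈ s.erase b,
      ((-1 : k) ^ ((s.filter (· < b)).card + ((s.erase b).filter (· < v)).card)) •
        M ((s.erase b).erase v) = 0 := by
  rw [Finset.sum_sigma']
  refine Finset.sum_involution (fun p _ => ⟨p.2, p.1⟩) ?_ ?_ ?_ ?_
  · rintro ⟨b, v⟩ hp
    simp only [Finset.mem_sigma] at hp
    obtain ⟨hb, hv⟩ := hp
    have hvs : v ∈ s := Finset.mem_of_mem_erase hv
    have hne : v ≠ b := Finset.ne_of_mem_erase hv
    have e1 : (s.filter (· < v)).card = ((s.erase b).filter (· < v)).card + if b < v then 1 else 0 :=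
      filter_card_erase hb v
    have e2 : (s.filter (· < b)).card = ((s.erase v).filter (· < b)).card + if v < b then 1 else 0 :=
      filter_card_erase hvs b
    have hface : (s.erase b).erase v = (s.erase v).erase b := Finset.erase_right_comm
    rw [hface, ← add_smul]
    convert zero_smul k _
    rcases lt_or_gt_of_ne hne with h | h
    · rw [e1, e2]
      simp [h, not_lt_of_gt h, pow_add, pow_succ]
      ring
    · rw [e1, e2]
      simp [h, not_lt_of_gt h, pow_add, pow_succ]
      ring
  · rintro ⟨b, v⟩ hp _ h
    simp only [Finset.mem_sigma] at hp
    exact Finset.ne_of_mem_erase hp.2 (congrArg Sigma.fst h)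
  · rintro ⟨b, v⟩ hp
    simp only [Finset.mem_sigma] at hp ⊢
    exact ⟨Finset.mem_of_mem_erase hp.2,
      Finset.mem_erase.mpr ⟨(Finset.ne_of_mem_erase hp.2).symm, hp.1⟩⟩
  · rintro ⟨b, v⟩ _; rfl

lemma boundary_boundary (m : ℕ) (z : simplicialChains k (BrFaces col) (m+2)) :
    simplicialBoundary k (BrFaces col) m (simplicialBoundary k (BrFaces col) (m+1) z) = 0 := by
  rw [chain_expand k col z, map_sum, map_sum]
  refine Finset.sum_eq_zero (fun t _ => ?_)
  rw [map_smul, map_smul]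
  rw [boundary_single k col (m+1) t.1 t.2.1 t.2.2, map_sum]
  have : ∀ v ∈ t.1, simplicialBoundary k (BrFaces col) m
      (((-1 : k) ^ (t.1.filter (· < v)).card) • Ee k col (m+1) (t.1.erase v)) =
      ∑ w ∈ t.1.erase v, ((-1:k) ^ ((t.1.filter (· < v)).card + ((t.1.erase v).filter (· < w)).card)) •
        Ee k col m ((t.1.erase v).erase w) := by
    intro v hv
    rw [map_smul, boundary_single k col m (t.1.erase v)
      (brFaces_mono col (Finset.erase_subset _ _) t.2.1)
      (by rw [Finset.card_erase_of_mem hv, t.2.2]; rfl)]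
    rw [Finset.smul_sum]
    exact Finset.sum_congr rfl (fun w _ => by rw [smul_smul, ← pow_add])
  rw [Finset.sum_congr rfl this, pair_cancel, smul_zero]


open Classical in
/-- prism homotopy corresponding to the elementary fold `u ↦ a` -/
noncomputable def foldH (u a : V) (m : ℕ) :
    simplicialChains k (BrFaces col) m →ₗ[k] simplicialChains k (BrFaces col) (m+1) :=
  LinearMap.lsum k (fun _ => k) k fun s =>
    LinearMap.toSpanSingleton k _
      (if u ∈ s.1 ∧ a ∉ s.1 then
        ((-1 : k) ^ (1 + (s.1.filter (· < a)).card)) • Ee k col (m+1) (insert a s.1)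
      else 0)

open Classical in
/-- cone homotopy with apex `a` -/
noncomputable def coneG (a : V) (m : ℕ) :
    simplicialChains k (BrFaces col) m →ₗ[k] simplicialChains k (BrFaces col) (m+1) :=
  LinearMap.lsum k (fun _ => k) k fun s =>
    LinearMap.toSpanSingleton k _
      (if a ∉ s.1 then
        ((-1 : k) ^ (s.1.filter (· < a)).card) • Ee k col (m+1) (insert a s.1)
      else 0)

lemma lsum_single_aux {m m' : ℕ} (f : Idx col m → simplicialChains k (BrFaces col) m')
    (t : Idx col m) :
    (LinearMap.lsum k (fun _ : Idx col m => k) k fun s => LinearMap.toSpanSingleton k _ (f s))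
      (Pi.single t 1) = f t := by
  rw [LinearMap.lsum_apply, LinearMap.sum_apply]
  rw [Finset.sum_eq_single t]
  · rw [LinearMap.comp_apply, LinearMap.proj_apply, Pi.single_eq_same,
      LinearMap.toSpanSingleton_apply_one]
  · intro b _ hb
    rw [LinearMap.comp_apply, LinearMap.proj_apply, Pi.single_eq_of_ne hb, map_zero]
  · intro h; exact absurd (Finset.mem_univ _) h

lemma foldH_single (u a : V) (m : ℕ) (t : Finset V) (hb : BrFaces col t) (hc : t.card = m) :
    foldH k col u a m (Ee k col m t) =
      if u ∈ t ∧ a ∉ t then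
        ((-1 : k) ^ (1 + (t.filter (· < a)).card)) • Ee k col (m+1) (insert a t)
      else 0 := by
  rw [Ee_valid k col m t ⟨hb, hc⟩]
  exact lsum_single_aux k col _ ⟨t, hb, hc⟩

lemma coneG_single (a : V) (m : ℕ) (t : Finset V) (hb : BrFaces col t) (hc : t.card = m) :
    coneG k col a m (Ee k col m t) =
      if a ∉ t then
        ((-1 : k) ^ (t.filter (· < a)).card) • Ee k col (m+1) (insert a t)
      else 0 := by
  rw [Ee_valid k col m t ⟨hb, hc⟩]
  exact lsum_single_aux k col _ ⟨t, hb, hc⟩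


lemma sign_pair_cancel {S1 S2 T1 T2 : ℕ} {P Q : Prop} [Decidable P] [Decidable Q]
    (h1 : T1 = S2 + (if P then 1 else 0)) (h2 : S1 = T2 + (if Q then 1 else 0))
    (hor : P ∨ Q) (hand : ¬(P ∧ Q)) :
    ((-1 : k) ^ (S1 + T1) + (-1 : k) ^ (S2 + T2)) = 0 := by
  by_cases hP : P
  · have hQ : ¬ Q := fun hq => hand ⟨hP, hq⟩
    rw [h1, h2, if_pos hP, if_neg hQ, Nat.add_zero]
    simp [pow_add, pow_succ]
    ring
  · have hQ : Q := hor.resolve_left hP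
    rw [h1, h2, if_neg hP, if_pos hQ, Nat.add_zero]
    simp [pow_add, pow_succ]
    ring

lemma cone_single_identity (a : V) (m : ℕ) (σ : Finset V) (hc : σ.card = m+1)
    (hm : m + 2 < r) :
    simplicialBoundary k (BrFaces col) (m+1) (coneG k col a (m+1) (Ee k col (m+1) σ)) +
      coneG k col a m (simplicialBoundary k (BrFaces col) m (Ee k col (m+1) σ)) =
      Ee k col (m+1) σ := by
  have hbσ : BrFaces col σ := brFaces_of_card_lt col (by omega)
  rw [coneG_single k col a (m+1) σ hbσ hc, boundary_single k col m σ hbσ hc]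
  have hsecond : ∀ v ∈ σ, coneG k col a m (((-1:k) ^ (σ.filter (· < v)).card) • Ee k col m (σ.erase v)) =
      if a ∉ σ.erase v then
        ((-1:k) ^ ((σ.filter (· < v)).card + ((σ.erase v).filter (· < a)).card)) •
          Ee k col (m+1) (insert a (σ.erase v))
      else 0 := by
    intro v hv
    rw [map_smul, coneG_single k col a m (σ.erase v)
      (brFaces_mono col (Finset.erase_subset _ _) hbσ)
      (by rw [Finset.card_erase_of_mem hv, hc]; rfl)]
    split_ifs with h <;> simp [smul_smul, pow_add]
  rw [map_sum, Finset.sum_congr rfl hsecond]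
  by_cases ha : a ∈ σ
  · rw [if_neg (by simpa using ha), map_zero, zero_add]
    rw [Finset.sum_eq_single a]
    · rw [if_pos (Finset.notMem_erase a σ), Finset.insert_erase ha]
      have hS : (σ.filter (· < a)).card = ((σ.erase a).filter (· < a)).card := by
        have := filter_card_erase (s := σ) ha a
        simpa using this
      rw [← hS, Even.neg_one_pow ⟨_, rfl⟩, one_smul]
    · intro v hv hva
      rw [if_neg (by simp only [not_not]; exact Finset.mem_erase.mpr ⟨fun h => hva h.symm, ha⟩)]
    · intro h; exact absurd ha h
  · rw [if_pos ha, map_smul, boundary_single k col (m+1) (insert a σ)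
      (brFaces_of_card_lt col (by rw [Finset.card_insert_of_notMem ha, hc]; omega))
      (by rw [Finset.card_insert_of_notMem ha, hc])]
    rw [Finset.sum_insert ha, smul_add, Finset.erase_insert ha]
    have hTa : ((insert a σ).filter (· < a)).card = (σ.filter (· < a)).card := by
      have := filter_card_insert ha a
      simpa using this
    rw [hTa, smul_smul, ← pow_add, Even.neg_one_pow ⟨_, rfl⟩, one_smul]
    rw [Finset.smul_sum]
    have hz : (∑ v ∈ σ, (-1:k) ^ (σ.filter (· < a)).card •
          ((-1:k) ^ ((insert a σ).filter (· < v)).card • Ee k col (m+1) ((insert a σ).erase v))) +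
        (∑ v ∈ σ, if a ∉ σ.erase v then
          ((-1:k) ^ ((σ.filter (· < v)).card + ((σ.erase v).filter (· < a)).card)) •
            Ee k col (m+1) (insert a (σ.erase v)) else 0) = 0 := by
      rw [← Finset.sum_add_distrib]
      refine Finset.sum_eq_zero (fun v hv => ?_)
      have hva : v ≠ a := fun h => ha (h ▸ hv)
      have hae : a ∉ σ.erase v := fun h => ha (Finset.mem_of_mem_erase h)
      rw [if_pos hae, smul_smul, ← pow_add, Finset.erase_insert_of_ne hva.symm, ← add_smul]
      convert zero_smul k _
      exact sign_pair_cancel k (P := a < v) (Q := v < a)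
        (filter_card_insert ha v) (filter_card_erase hv a)
        (lt_or_gt_of_ne (fun h : a = v => hva h.symm))
        (fun ⟨h1, h2⟩ => absurd h1 (not_lt_of_gt h2))
    rw [add_assoc, hz, add_zero]


lemma cone_identity_apply (a : V) (m : ℕ) (hm : m + 2 < r)
    (z : simplicialChains k (BrFaces col) (m+1)) :
    simplicialBoundary k (BrFaces col) (m+1) (coneG k col a (m+1) z) +
      coneG k col a m (simplicialBoundary k (BrFaces col) m z) = z := by
  conv_lhs => rw [chain_expand k col z]
  conv_rhs => rw [chain_expand k col z]
  rw [map_sum, map_sum, map_sum, map_sum, ← Finset.sum_add_distrib]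
  refine Finset.sum_congr rfl (fun t _ => ?_)
  rw [map_smul, map_smul, map_smul, map_smul, ← smul_add]
  rw [cone_single_identity k col a m t.1 t.2.2 hm]

/-- the elementary fold operator (chain homotopic to the identity). -/
noncomputable def Fold (u a : V) (m : ℕ) :
    simplicialChains k (BrFaces col) (m+1) →ₗ[k] simplicialChains k (BrFaces col) (m+1) :=
  LinearMap.id + (simplicialBoundary k (BrFaces col) (m+1)) ∘ₗ foldH k col u a (m+1)
    + foldH k col u a m ∘ₗ simplicialBoundary k (BrFaces col) m

lemma fold_single (u a : V) (hcolu : col a = col u) (hne : u ≠ a) (m : ℕ)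
    (σ : Finset V) (hb : BrFaces col σ) (hc : σ.card = m+1) (hm : m + 1 ≤ r) :
    Fold k col u a m (Ee k col (m+1) σ) =
      if u ∈ σ then
        (if a ∈ σ then 0 else
          ((-1 : k) ^ (1 + (σ.filter (· < a)).card + ((insert a σ).filter (· < u)).card)) •
            Ee k col (m+1) ((insert a σ).erase u))
      else Ee k col (m+1) σ := by
  unfold Fold
  rw [LinearMap.add_apply, LinearMap.add_apply, LinearMap.id_apply, LinearMap.comp_apply,
    LinearMap.comp_apply]
  rw [foldH_single k col u a (m+1) σ hb hc, boundary_single k col m σ hb hc]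
  have hsecond : ∀ v ∈ σ, foldH k col u a m (((-1:k) ^ (σ.filter (· < v)).card) • Ee k col m (σ.erase v)) =
      if u ∈ σ.erase v ∧ a ∉ σ.erase v then
        ((-1:k) ^ ((σ.filter (· < v)).card + (1 + ((σ.erase v).filter (· < a)).card))) •
          Ee k col (m+1) (insert a (σ.erase v))
      else 0 := by
    intro v hv
    rw [map_smul, foldH_single k col u a m (σ.erase v)
      (brFaces_mono col (Finset.erase_subset _ _) hb)
      (by rw [Finset.card_erase_of_mem hv, hc]; rfl)]
    split_ifs with h <;> simp [smul_smul, pow_add]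
  rw [map_sum, Finset.sum_congr rfl hsecond]
  by_cases hu : u ∈ σ
  · by_cases ha : a ∈ σ
    · -- both present: homotopy gives -Ee σ, cancelling the identity term
      rw [if_pos hu, if_pos ha]
      rw [if_neg (by rintro ⟨-, h2⟩; exact h2 ha), map_zero, add_zero]
      rw [Finset.sum_eq_single a]
      · rw [if_pos ⟨Finset.mem_erase.mpr ⟨hne, hu⟩, Finset.notMem_erase a σ⟩,
          Finset.insert_erase ha]
        have hS : (σ.filter (· < a)).card = ((σ.erase a).filter (· < a)).card := by
          have := filter_card_erase (s := σ) ha a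
          simpa using this
        rw [← hS]
        rw [show (σ.filter (· < a)).card + (1 + (σ.filter (· < a)).card)
            = ((σ.filter (· < a)).card + (σ.filter (· < a)).card) + 1 by ring, pow_succ,
          Even.neg_one_pow ⟨_, rfl⟩, one_mul, neg_one_smul]
        rw [add_neg_cancel]
      · intro v hv hva
        rw [if_neg (by rintro ⟨-, h2⟩; exact h2 (Finset.mem_erase.mpr ⟨fun hh => hva hh.symm, ha⟩))]
      · intro h; exact absurd ha h
    · -- u ∈ σ, a ∉ σ : main case
      rw [if_pos hu, if_neg ha, if_pos ⟨hu, ha⟩]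
      have hbσ' : BrFaces col (insert a σ) := by
        refine ⟨by rw [Finset.card_insert_of_notMem ha, hc]; omega, ?_⟩
        have himg : (insert a σ).image col = σ.image col := by
          rw [Finset.image_insert, hcolu, Finset.insert_eq_self.mpr (Finset.mem_image_of_mem col hu)]
        rw [himg]; exact hb.2
      rw [map_smul, boundary_single k col (m+1) (insert a σ) hbσ'
        (by rw [Finset.card_insert_of_notMem ha, hc])]
      rw [Finset.sum_insert ha, smul_add, Finset.erase_insert ha]
      have hTa : ((insert a σ).filter (· < a)).card = (σ.filter (· < a)).card := by
        have := filter_card_insert ha a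
        simpa using this
      rw [hTa, smul_smul, ← pow_add]
      rw [show 1 + (σ.filter (· < a)).card + (σ.filter (· < a)).card
          = ((σ.filter (· < a)).card + (σ.filter (· < a)).card) + 1 by ring, pow_succ,
        Even.neg_one_pow ⟨_, rfl⟩, one_mul, neg_one_smul]
      rw [Finset.smul_sum]
      -- remaining: Ee σ + (-Ee σ + Σ ...) + Σ ... = target
      have hsplit : ∀ v ∈ σ, (-1:k) ^ (1 + (σ.filter (· < a)).card) •
            ((-1:k) ^ (((insert a σ)).filter (· < v)).card • Ee k col (m+1) ((insert a σ).erase v)) +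
          (if u ∈ σ.erase v ∧ a ∉ σ.erase v then
            ((-1:k) ^ ((σ.filter (· < v)).card + (1 + ((σ.erase v).filter (· < a)).card))) •
              Ee k col (m+1) (insert a (σ.erase v))
          else 0) =
          if v = u then ((-1 : k) ^ (1 + (σ.filter (· < a)).card + ((insert a σ).filter (· < u)).card)) •
            Ee k col (m+1) ((insert a σ).erase u) else 0 := by
        intro v hv
        have hva : v ≠ a := fun h => ha (h ▸ hv)
        by_cases hvu : v = u
        · subst hvu
          rw [if_pos rfl, if_neg (by rintro ⟨h1, -⟩; exact (Finset.notMem_erase v σ) h1), add_zero,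
            smul_smul, ← pow_add]
        · rw [if_pos ⟨Finset.mem_erase.mpr ⟨fun h => hvu h.symm, hu⟩,
            fun h => ha (Finset.mem_of_mem_erase h)⟩, if_neg hvu]
          rw [smul_smul, ← pow_add, Finset.erase_insert_of_ne hva.symm, ← add_smul]
          convert zero_smul k _
          have e1 : ((insert a σ).filter (· < v)).card
              = (σ.filter (· < v)).card + (if a < v then 1 else 0) := filter_card_insert ha v
          have e2 : (σ.filter (· < a)).card
              = ((σ.erase v).filter (· < a)).card + (if v < a then 1 else 0) := filter_card_erase hv a
          refine sign_pair_cancel k (S1 := 1 + (σ.filter (· < a)).card)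
            (S2 := (σ.filter (· < v)).card)
            (T2 := 1 + ((σ.erase v).filter (· < a)).card) (P := a < v) (Q := v < a) e1 ?_
            (lt_or_gt_of_ne (fun h : a = v => hva h.symm))
            (fun ⟨x1, x2⟩ => absurd x1 (not_lt_of_gt x2))
          rw [e2]; ring
      rw [add_neg_cancel_left, ← Finset.sum_add_distrib,
        Finset.sum_congr rfl hsplit, Finset.sum_ite_eq' σ u _, if_pos hu]
  · -- u ∉ σ : Fold acts as the identity
    rw [if_neg hu]
    rw [if_neg (fun h => hu h.1), map_zero, add_zero]
    rw [Finset.sum_eq_zero, add_zero]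
    intro v hv
    rw [if_neg (fun h => hu (Finset.mem_of_mem_erase h.1))]


lemma boundary_fold_comm (u a : V) (m : ℕ) (z : simplicialChains k (BrFaces col) (m+2)) :
    simplicialBoundary k (BrFaces col) (m+1) (Fold k col u a (m+1) z) =
      Fold k col u a m (simplicialBoundary k (BrFaces col) (m+1) z) := by
  unfold Fold
  simp only [LinearMap.add_apply, LinearMap.id_apply, LinearMap.comp_apply]
  rw [boundary_boundary, map_zero, map_add, map_add]
  rw [boundary_boundary k col (m+1) (foldH k col u a (m+2) z)]
  abel

lemma fold_cycle_range (u a : V) (m : ℕ) (z : simplicialChains k (BrFaces col) (m+1))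
    (hz : simplicialBoundary k (BrFaces col) m z = 0) :
    simplicialBoundary k (BrFaces col) m (Fold k col u a m z) = 0 ∧
      z - Fold k col u a m z ∈ LinearMap.range (simplicialBoundary k (BrFaces col) (m+1)) := by
  have hF : Fold k col u a m z = z + simplicialBoundary k (BrFaces col) (m+1) (foldH k col u a (m+1) z) := by
    unfold Fold
    simp only [LinearMap.add_apply, LinearMap.id_apply, LinearMap.comp_apply, hz, map_zero,
      add_zero]
  constructor
  · rw [hF, map_add, hz, boundary_boundary, add_zero]
  · rw [hF]
    refine ⟨-(foldH k col u a (m+1) z), ?_⟩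
    rw [map_neg]
    abel

/-- composite of elementary folds along a list (with anchor assignment `anch`) -/
noncomputable def PhiL (anch : V → V) (L : List V) (m : ℕ) :
    simplicialChains k (BrFaces col) (m+1) →ₗ[k] simplicialChains k (BrFaces col) (m+1) :=
  L.foldr (fun u acc => Fold k col u (anch u) m ∘ₗ acc) LinearMap.id

lemma phiL_nil (anch : V → V) (m : ℕ) : PhiL k col anch [] m = LinearMap.id := rfl

lemma phiL_cons (anch : V → V) (u : V) (L : List V) (m : ℕ) :
    PhiL k col anch (u :: L) m = Fold k col u (anch u) m ∘ₗ PhiL k col anch L m := rfl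

lemma phiL_boundary_comm (anch : V → V) (L : List V) (m : ℕ)
    (z : simplicialChains k (BrFaces col) (m+2)) :
    simplicialBoundary k (BrFaces col) (m+1) (PhiL k col anch L (m+1) z) =
      PhiL k col anch L m (simplicialBoundary k (BrFaces col) (m+1) z) := by
  induction L with
  | nil => rfl
  | cons u L ih =>
    rw [phiL_cons, phiL_cons, LinearMap.comp_apply, LinearMap.comp_apply,
      boundary_fold_comm, ih]

lemma phiL_cycle_range (anch : V → V) (L : List V) (m : ℕ)
    (z : simplicialChains k (BrFaces col) (m+1))
    (hz : simplicialBoundary k (BrFaces col) m z = 0) :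
    simplicialBoundary k (BrFaces col) m (PhiL k col anch L m z) = 0 ∧
      z - PhiL k col anch L m z ∈ LinearMap.range (simplicialBoundary k (BrFaces col) (m+1)) := by
  induction L with
  | nil => exact ⟨hz, by simp [phiL_nil]⟩
  | cons u L ih =>
    rw [phiL_cons, LinearMap.comp_apply]
    obtain ⟨ih1, ih2⟩ := ih
    obtain ⟨f1, f2⟩ := fold_cycle_range k col u (anch u) m (PhiL k col anch L m z) ih1
    refine ⟨f1, ?_⟩
    have : z - Fold k col u (anch u) m (PhiL k col anch L m z) =
        (z - PhiL k col anch L m z) +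
        (PhiL k col anch L m z - Fold k col u (anch u) m (PhiL k col anch L m z)) := by abel
    rw [this]
    exact Submodule.add_mem _ ih2 f2

/-- `z` is supported on faces contained in `T` -/
def SuppP (T : Finset V) {m : ℕ} (z : simplicialChains k (BrFaces col) m) : Prop :=
  ∀ t : Idx col m, ¬ t.1 ⊆ T → z t = 0

lemma suppP_mono {T T' : Finset V} (h : T ⊆ T') {m : ℕ}
    {z : simplicialChains k (BrFaces col) m} (hz : SuppP k col T z) : SuppP k col T' z :=
  fun t ht => hz t (fun hsub => ht (hsub.trans h))

lemma fold_supp (u a : V) (hcolu : col a = col u) (hne : u ≠ a) (m : ℕ) (hm : m + 1 ≤ r)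
    {T : Finset V} {z : simplicialChains k (BrFaces col) (m+1)} (hz : SuppP k col T z) :
    SuppP k col ((T.erase u) ∪ {a}) (Fold k col u a m z) := by
  intro t ht
  conv_lhs => rw [chain_expand k col z, map_sum]
  rw [Finset.sum_apply]
  refine Finset.sum_eq_zero (fun s _ => ?_)
  rw [map_smul, Pi.smul_apply, smul_eq_mul]
  by_cases hzs : z s = 0
  · rw [hzs, zero_mul]
  · have hsT : s.1 ⊆ T := by
      by_contra hc
      exact hzs (hz s hc)
    rw [fold_single k col u a hcolu hne m s.1 s.2.1 s.2.2 hm]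
    by_cases hus : u ∈ s.1
    · by_cases has : a ∈ s.1
      · rw [if_pos hus, if_pos has, Pi.zero_apply, mul_zero]
      · rw [if_pos hus, if_neg has, Pi.smul_apply, smul_eq_mul, Ee_apply, if_neg, mul_zero,
          mul_zero]
        intro hteq
        refine ht ?_
        rw [hteq]
        intro x hx
        rcases Finset.mem_insert.mp (Finset.mem_of_mem_erase hx) with h1 | h1
        · exact Finset.mem_union_right _ (Finset.mem_singleton.mpr h1)
        · exact Finset.mem_union_left _
            (Finset.mem_erase.mpr ⟨Finset.ne_of_mem_erase hx, hsT h1⟩)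
    · rw [if_neg hus, Ee_apply, if_neg, mul_zero]
      intro hteq
      refine ht ?_
      rw [hteq]
      intro x hx
      exact Finset.mem_union_left _
        (Finset.mem_erase.mpr ⟨fun hxu => hus (hxu ▸ hx), hsT hx⟩)

lemma fold_fix (u a : V) (hcolu : col a = col u) (hne : u ≠ a) (m : ℕ) (hm : m + 1 ≤ r)
    (σ : Finset V) (hb : BrFaces col σ) (hc : σ.card = m+1) (hu : u ∉ σ) :
    Fold k col u a m (Ee k col (m+1) σ) = Ee k col (m+1) σ := by
  rw [fold_single k col u a hcolu hne m σ hb hc hm, if_neg hu]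


lemma phiL_supp (anch : V → V) (L : List V) (m : ℕ) (hm : m + 1 ≤ r) (AA : Finset V)
    (hanch : ∀ u ∈ L, col (anch u) = col u ∧ u ≠ anch u ∧ anch u ∈ AA) :
    ∀ (T : Finset V) (z : simplicialChains k (BrFaces col) (m+1)), SuppP k col T z →
      SuppP k col ((T \ L.toFinset) ∪ AA) (PhiL k col anch L m z) := by
  induction L with
  | nil =>
    intro T z hz
    rw [phiL_nil]
    refine suppP_mono k col ?_ hz
    intro x hx
    exact Finset.mem_union_left _ (by simpa using hx)
  | cons u L ih =>
    intro T z hz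
    rw [phiL_cons, LinearMap.comp_apply]
    obtain ⟨h1, h2, h3⟩ := hanch u (List.mem_cons_self)
    have hs := fold_supp k col u (anch u) h1 h2 m hm
      (ih (fun v hv => hanch v (List.mem_cons_of_mem u hv)) T z hz)
    refine suppP_mono k col ?_ hs
    intro x hx
    rcases Finset.mem_union.mp hx with hx | hx
    · have hxu := Finset.ne_of_mem_erase hx
      rcases Finset.mem_union.mp (Finset.mem_of_mem_erase hx) with hy | hy
      · refine Finset.mem_union_left _ ?_
        rw [Finset.mem_sdiff] at hy ⊢
        refine ⟨hy.1, fun hc => ?_⟩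
        rw [List.toFinset_cons, Finset.mem_insert] at hc
        rcases hc with hc | hc
        · exact hxu hc
        · exact hy.2 hc
      · exact Finset.mem_union_right _ hy
    · rw [Finset.mem_singleton] at hx
      exact Finset.mem_union_right _ (hx ▸ h3)

lemma supp_top_zero {A : Finset V} (hA : A.card = r) (hrel : A.image col = Finset.univ)
    {m : ℕ} (hm : m = r) (z : simplicialChains k (BrFaces col) m) (hz : SuppP k col A z) :
    z = 0 := by
  funext t
  by_cases hsub : t.1 ⊆ A
  · have : t.1 = A := Finset.eq_of_subset_of_card_le hsub (by rw [hA, t.2.2, hm])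
    exact absurd (by rw [this, hrel] : t.1.image col = Finset.univ) t.2.1.2
  · exact hz t hsub

lemma mem_erase_of_mem_of_ne {A : Finset V} {b c : V} (hb : b ∈ A) (hbc : b ≠ c) :
    b ∈ A.erase c := Finset.mem_erase.mpr ⟨hbc, hb⟩

lemma erase_injective_on {A : Finset V} {b c : V} (hb : b ∈ A)
    (h : A.erase b = A.erase c) : b = c := by
  by_contra hbc
  exact Finset.notMem_erase b A (h ▸ mem_erase_of_mem_of_ne hb hbc)

lemma subset_erase_form {A t : Finset V} (hsub : t ⊆ A) (hcard : t.card + 1 = A.card) :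
    ∃ b ∈ A, t = A.erase b := by
  have hc1 : (A \ t).card = 1 := by
    rw [Finset.card_sdiff_of_subset hsub]; omega
  obtain ⟨b, hb⟩ := Finset.card_eq_one.mp hc1
  have hbA : b ∈ A := (Finset.mem_sdiff.mp (hb ▸ Finset.mem_singleton_self b)).1
  have hbt : b ∉ t := (Finset.mem_sdiff.mp (hb ▸ Finset.mem_singleton_self b)).2
  refine ⟨b, hbA, ?_⟩
  ext x
  simp only [Finset.mem_erase]
  constructor
  · intro hx
    exact ⟨fun hxb => hbt (hxb ▸ hx), hsub hx⟩
  · rintro ⟨hxb, hxA⟩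
    by_contra hxt
    have : x ∈ A \ t := Finset.mem_sdiff.mpr ⟨hxA, hxt⟩
    rw [hb, Finset.mem_singleton] at this
    exact hxb this

lemma filter_lt_min_zero {A s : Finset V} (hAne : A.Nonempty) (hs : s ⊆ A) :
    (s.filter (· < A.min' hAne)).card = 0 := by
  rw [Finset.card_eq_zero, Finset.filter_eq_empty_iff]
  intro x hx
  exact not_lt_of_ge (A.min'_le x (hs hx))

/-- the fundamental cycle supported on the boundary of the simplex on `A` -/
noncomputable def zeta (A : Finset V) (e : ℕ) : simplicialChains k (BrFaces col) (e+1) :=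
  ∑ b ∈ A, ((-1:k) ^ ((A.filter (· < b)).card)) • Ee k col (e+1) (A.erase b)

lemma zeta_coeff (A : Finset V) (e : ℕ) {b : V} (hb : b ∈ A) (t : Idx col (e+1))
    (ht : t.1 = A.erase b) :
    zeta k col A e t = (-1:k) ^ ((A.filter (· < b)).card) := by
  unfold zeta
  rw [Finset.sum_apply]
  rw [Finset.sum_eq_single b]
  · rw [Pi.smul_apply, Ee_apply, if_pos ht, smul_eq_mul, mul_one]
  · intro c hc hcb
    rw [Pi.smul_apply, Ee_apply, if_neg, smul_eq_mul, mul_zero]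
    rw [ht]
    intro h
    exact hcb (erase_injective_on hb h).symm
  · intro h; exact absurd hb h

lemma zeta_outside (A : Finset V) (e : ℕ) (t : Idx col (e+1)) (ht : ¬ t.1 ⊆ A) :
    zeta k col A e t = 0 := by
  unfold zeta
  rw [Finset.sum_apply]
  refine Finset.sum_eq_zero (fun b hb => ?_)
  rw [Pi.smul_apply, Ee_apply, if_neg, smul_eq_mul, mul_zero]
  intro h
  exact ht (h ▸ Finset.erase_subset b A)

lemma zeta_cycle (A : Finset V) (e : ℕ) (hA : A.card = e+2) (hre : r = e+2) :
    simplicialBoundary k (BrFaces col) e (zeta k col A e) = 0 := by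
  unfold zeta
  rw [map_sum]
  have : ∀ b ∈ A, simplicialBoundary k (BrFaces col) e
      (((-1:k) ^ ((A.filter (· < b)).card)) • Ee k col (e+1) (A.erase b)) =
      ∑ v ∈ A.erase b, ((-1:k) ^ ((A.filter (· < b)).card + ((A.erase b).filter (· < v)).card)) •
        Ee k col e ((A.erase b).erase v) := by
    intro b hb
    rw [map_smul, boundary_single k col e (A.erase b)
      (brFaces_of_card_lt col (by rw [Finset.card_erase_of_mem hb, hA, hre]; omega))
      (by rw [Finset.card_erase_of_mem hb, hA]; omega)]
    rw [Finset.smul_sum]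
    exact Finset.sum_congr rfl (fun w _ => by rw [smul_smul, ← pow_add])
  rw [Finset.sum_congr rfl this, pair_cancel]


lemma supp_cycle_eq_zeta (A : Finset V) (e : ℕ) (hA : A.card = e+2) (hre : r = e+2)
    (hAne : A.Nonempty) (z : simplicialChains k (BrFaces col) (e+1))
    (hz : simplicialBoundary k (BrFaces col) e z = 0) (hsupp : SuppP k col A z)
    (t₀ : Idx col (e+1)) (ht₀ : t₀.1 = A.erase (A.min' hAne)) :
    z = z t₀ • zeta k col A e := by
  set a₀ := A.min' hAne with ha₀
  have ha₀A : a₀ ∈ A := A.min'_mem hAne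
  funext t
  rw [Pi.smul_apply, smul_eq_mul]
  by_cases hsub : t.1 ⊆ A
  · obtain ⟨b, hbA, hbt⟩ := subset_erase_form hsub (by rw [t.2.2, hA])
    by_cases hba : b = a₀
    · have htt₀ : t = t₀ := Subtype.ext (by rw [hbt, ht₀, hba])
      rw [htt₀, zeta_coeff k col A e ha₀A t₀ ht₀]
      rw [show (A.filter (· < a₀)).card = 0 from filter_lt_min_zero hAne (subset_refl A),
        pow_zero, mul_one]
    · have hbne : b ≠ a₀ := hba
      have ha₀ba : a₀ ≠ b := fun h => hba h.symm
      have ha₀b : a₀ < b := lt_of_le_of_ne (A.min'_le b hbA) ha₀ba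
      have ha₀eb : a₀ ∈ A.erase b := mem_erase_of_mem_of_ne ha₀A ha₀ba
      have hbea : b ∈ A.erase a₀ := mem_erase_of_mem_of_ne hbA hbne
      have huval : BrFaces col ((A.erase b).erase a₀) ∧ ((A.erase b).erase a₀).card = e := by
        have hc2 : ((A.erase b).erase a₀).card = e := by
          rw [Finset.card_erase_of_mem ha₀eb, Finset.card_erase_of_mem hbA, hA]
          omega
        exact ⟨brFaces_of_card_lt col (by rw [hc2]; omega), hc2⟩
      set uI : Idx col e := ⟨(A.erase b).erase a₀, huval⟩ with huI
      have hu0 : (simplicialBoundary k (BrFaces col) e z) uI = 0 := by rw [hz]; rfl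
      set F : Idx col (e+1) → k := fun s => z s *
        ∑ v ∈ s.1, ((-1:k) ^ ((s.1.filter (· < v)).card)) *
          (if uI.1 = s.1.erase v then 1 else 0) with hFdef
      have hu0' : ∑ s : Idx col (e+1), F s = 0 := by
        rw [← hu0]
        conv_rhs => rw [chain_expand k col z, map_sum, Finset.sum_apply]
        refine Finset.sum_congr rfl (fun s _ => ?_)
        simp only [hFdef]
        rw [map_smul, boundary_single k col e s.1 s.2.1 s.2.2, Pi.smul_apply,
          smul_eq_mul, Finset.sum_apply]
        congr 1
        refine Finset.sum_congr rfl (fun v hv => ?_)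
        rw [Pi.smul_apply, Ee_apply, smul_eq_mul]
      have htne : t₀ ≠ t := by
        intro h
        apply hbne
        apply erase_injective_on hbA
        rw [← hbt, ← h, ht₀]
      have hvanish : ∀ s ∈ (Finset.univ : Finset (Idx col (e+1))),
          s ∉ ({t₀, t} : Finset (Idx col (e+1))) → F s = 0 := by
        intro s _ hs
        rw [Finset.mem_insert, Finset.mem_singleton] at hs
        push_neg at hs
        by_cases hzs : z s = 0
        · rw [hFdef]; dsimp only; rw [hzs, zero_mul]
        · have hsA : s.1 ⊆ A := by
            by_contra hc
            exact hzs (hsupp s hc)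
          obtain ⟨c, hcA, hcs⟩ := subset_erase_form hsA (by rw [s.2.2, hA])
          have hca₀ : c ≠ a₀ := fun h => hs.1 (Subtype.ext (by rw [hcs, h, ← ht₀])).symm
          have hcb : c ≠ b := fun h => hs.2 (Subtype.ext (by rw [hcs, h, ← hbt])).symm
          rw [hFdef]; dsimp only
          rw [Finset.sum_eq_zero, mul_zero]
          intro v hv
          rw [if_neg, mul_zero]
          intro heq
          have hcin : c ∈ (A.erase b).erase a₀ :=
            Finset.mem_erase.mpr ⟨hca₀, mem_erase_of_mem_of_ne hcA hcb⟩
          rw [show (A.erase b).erase a₀ = uI.1 from rfl, heq, hcs] at hcin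
          exact Finset.notMem_erase c A (Finset.mem_of_mem_erase hcin)
      have hsum2 : F t₀ + F t = 0 := by
        rw [← Finset.sum_pair htne]
        rw [Finset.sum_subset (Finset.subset_univ _) hvanish]
        exact hu0'
      have hFt₀ : F t₀ = z t₀ * ((-1:k) ^ (((A.erase a₀).filter (· < b)).card)) := by
        rw [hFdef]; dsimp only
        congr 1
        rw [Finset.sum_eq_single b]
        · rw [if_pos, mul_one, ht₀]
          rw [ht₀]
          exact Finset.erase_right_comm
        · intro v hv hvb
          rw [if_neg, mul_zero]
          rw [ht₀, show uI.1 = (A.erase b).erase a₀ from rfl, Finset.erase_right_comm]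
          intro heq
          rw [ht₀] at hv
          exact hvb (erase_injective_on hbea heq).symm
        · intro h
          rw [ht₀] at h
          exact absurd hbea h
      have hFt : F t = z t := by
        rw [hFdef]; dsimp only
        rw [Finset.sum_eq_single a₀]
        · rw [if_pos, mul_one, hbt]
          · rw [show ((A.erase b).filter (· < a₀)).card = 0 from
              filter_lt_min_zero hAne (Finset.erase_subset b A), pow_zero, mul_one]
          · rw [hbt]
        · intro v hv hva₀
          rw [if_neg, mul_zero]
          rw [hbt]
          intro heq
          rw [hbt] at hv
          exact hva₀ (erase_injective_on ha₀eb heq).symm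
        · intro h
          rw [hbt] at h
          exact absurd ha₀eb h
      rw [hFt₀, hFt] at hsum2
      rw [zeta_coeff k col A e hbA t hbt]
      rw [show (A.filter (· < b)).card = ((A.erase a₀).filter (· < b)).card + 1 by
        rw [filter_card_erase ha₀A b, if_pos ha₀b]]
      rw [pow_succ]
      linear_combination hsum2
  · rw [hsupp t hsub, zeta_outside k col A e t hsub, mul_zero]

end Dev

set_option maxHeartbeats 1000000 in
/-- Lemma 2.2, global part: if every color class has at least two
elements, then `H̃_{r-2}(B_r; k) ≅ k` and `H̃_j(B_r; k) = 0` for every `j < r` with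
`j ≠ r - 2`.  Reduced degree `j` corresponds to chain degree `d = j + 1` of the augmented
complex, so the vanishing is stated for chain degrees `d ≤ r` with `d ≠ r - 1` (first
conjunct, splitting into the cases `d = 0` and `d = e + 1`), and `H̃_{r-2} ≅ k` is stated
at chain degree `r - 1` (second and third conjuncts, splitting into the cases `r = 1`
and `r = e + 2`). -/
theorem reduced_homology_Br {V : Type*} [Fintype V] [LinearOrder V]
    (k : Type*) [Field k] {r : ℕ} (hr : 1 ≤ r) (col : V → Fin r)
    (hcol : ∀ i : Fin r, 2 ≤ (Finset.univ.filter fun v => col v = i).card) :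
    (∀ d : ℕ, d ≤ r → d ≠ r - 1 →
      (d = 0 → LinearMap.range (simplicialBoundary k (BrFaces col) 0) = ⊤) ∧
      (∀ e : ℕ, d = e + 1 →
        LinearMap.ker (simplicialBoundary k (BrFaces col) e) =
          LinearMap.range (simplicialBoundary k (BrFaces col) (e + 1)))) ∧
    (r = 1 →
      Nonempty ((simplicialChains k (BrFaces col) 0 ⧸
        LinearMap.range (simplicialBoundary k (BrFaces col) 0)) ≃ₗ[k] k)) ∧
    (∀ e : ℕ, r = e + 2 →
      Nonempty ((LinearMap.ker (simplicialBoundary k (BrFaces col) e) ⧸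
        Submodule.comap (LinearMap.ker (simplicialBoundary k (BrFaces col) e)).subtype
          (LinearMap.range (simplicialBoundary k (BrFaces col) (e + 1)))) ≃ₗ[k] k)) := by
  classical
  have hclassne : ∀ i : Fin r, (Finset.univ.filter fun v => col v = i).Nonempty :=
    fun i => Finset.card_pos.mp (by have := hcol i; omega)
  set anch0 : Fin r → V := fun i => (Finset.univ.filter fun v => col v = i).min' (hclassne i)
    with hanch0
  have hanchcol : ∀ i, col (anch0 i) = i := fun i =>
    (Finset.mem_filter.mp ((Finset.univ.filter fun v => col v = i).min'_mem (hclassne i))).2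
  set A : Finset V := Finset.univ.image anch0 with hAdef
  have hanchmem : ∀ i, anch0 i ∈ A := fun i => Finset.mem_image_of_mem _ (Finset.mem_univ i)
  have hAcard : A.card = r := by
    rw [hAdef, Finset.card_image_of_injective _ (fun i j hij => by
      rw [← hanchcol i, ← hanchcol j, hij]), Finset.card_univ, Fintype.card_fin]
  have hArel : A.image col = Finset.univ := by
    rw [hAdef, Finset.image_image, show col ∘ anch0 = id from funext hanchcol, Finset.image_id]
  set anch : V → V := fun u => anch0 (col u) with hanchdef
  set Lfull : List V := (Finset.univ.filter (fun v => v ∉ A)).toList with hLdef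
  have hLprop : ∀ u ∈ Lfull, u ∉ A := by
    intro u hu
    rw [hLdef, Finset.mem_toList, Finset.mem_filter] at hu
    exact hu.2
  have hanchprop : ∀ u ∈ Lfull, col (anch u) = col u ∧ u ≠ anch u ∧ anch u ∈ A := by
    intro u hu
    exact ⟨hanchcol _, fun h => hLprop u hu (by rw [h]; exact hanchmem (col u)),
      hanchmem (col u)⟩
  have hsupA : ∀ (m : ℕ), m + 1 ≤ r → ∀ z : simplicialChains k (BrFaces col) (m+1),
      SuppP k col A (PhiL k col anch Lfull m z) := by
    intro m hm z
    have h0 : SuppP k col Finset.univ z := fun t ht => absurd (Finset.subset_univ t.1) ht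
    refine suppP_mono k col ?_ (phiL_supp k col anch Lfull m hm A hanchprop Finset.univ z h0)
    intro x hx
    rcases Finset.mem_union.mp hx with hx | hx
    · rw [Finset.mem_sdiff] at hx
      by_contra hxA
      exact hx.2 (List.mem_toFinset.mpr (by
        rw [hLdef, Finset.mem_toList, Finset.mem_filter]
        exact ⟨Finset.mem_univ x, hxA⟩))
    · exact hx
  -- vanishing of the composite in top degree
  have hPhiTop : ∀ (m : ℕ), m + 1 = r → ∀ z : simplicialChains k (BrFaces col) (m+1),
      PhiL k col anch Lfull m z = 0 := by
    intro m hm z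
    exact supp_top_zero k col hAcard hArel hm _ (hsupA m (le_of_eq hm) z)
  refine ⟨?_, ?_, ?_⟩
  · -- vanishing statements
    intro d hd hdne
    constructor
    · -- d = 0 : surjectivity onto degree 0
      rintro rfl
      have hr2 : 2 ≤ r := by omega
      have hemp : BrFaces col (∅ : Finset V) ∧ (∅ : Finset V).card = 0 :=
        ⟨brFaces_of_card_lt col (by rw [Finset.card_empty]; omega), Finset.card_empty⟩
      obtain ⟨v₀, -⟩ : ∃ v : V, True := ⟨anch0 ⟨0, hr⟩, trivial⟩
      have hv₀ : BrFaces col ({v₀} : Finset V) :=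
        brFaces_of_card_lt col (by rw [Finset.card_singleton]; omega)
      have hBv₀ : simplicialBoundary k (BrFaces col) 0 (Ee k col 1 ({v₀} : Finset V)) =
          Ee k col 0 ∅ := by
        rw [boundary_single k col 0 {v₀} hv₀ (Finset.card_singleton v₀), Finset.sum_singleton]
        rw [show ({v₀} : Finset V).filter (· < v₀) = ∅ from
          Finset.filter_eq_empty_iff.mpr (by intro x hx; rw [Finset.mem_singleton] at hx
                                             simp [hx]),
          Finset.card_empty, pow_zero, one_smul, Finset.erase_singleton]
      rw [eq_top_iff]
      rintro z -
      refine ⟨z ⟨∅, hemp⟩ • Ee k col 1 ({v₀} : Finset V), ?_⟩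
      rw [map_smul, hBv₀]
      funext t
      have : t = ⟨∅, hemp⟩ := Subtype.ext (Finset.card_eq_zero.mp t.2.2)
      rw [this, Pi.smul_apply, Ee_apply, if_pos rfl, smul_eq_mul, mul_one]
    · -- exactness at chain degree e + 1 = d
      rintro e rfl
      ext x
      simp only [LinearMap.mem_ker, LinearMap.mem_range]
      constructor
      · intro hx
        rcases Nat.lt_or_ge (e + 2) r with hlt | hge
        · -- low degree : cone contraction
          refine ⟨coneG k col (anch0 ⟨0, by omega⟩) (e+1) x, ?_⟩
          have := cone_identity_apply k col (anch0 ⟨0, by omega⟩) e hlt x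
          rwa [hx, map_zero, add_zero] at this
        · -- top degree e + 1 = r : fold contraction
          have hm : e + 1 = r := by omega
          obtain ⟨hc1, hc2⟩ := phiL_cycle_range k col anch Lfull e x hx
          rw [hPhiTop e hm x, sub_zero] at hc2
          exact hc2
      · rintro ⟨y, rfl⟩
        exact boundary_boundary k col e y
  · -- r = 1
    rintro rfl
    have hempty : IsEmpty (Idx col 1) := by
      refine ⟨fun t => ?_⟩
      obtain ⟨v, hv⟩ := Finset.card_eq_one.mp t.2.2
      refine t.2.1.2 ?_
      rw [hv, Finset.image_singleton]
      exact Finset.eq_univ_iff_forall.mpr (fun i => by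
        rw [Finset.mem_singleton]; exact Subsingleton.elim i (col v))
    have hbot : LinearMap.range (simplicialBoundary k (BrFaces col) 0) = ⊥ := by
      rw [eq_bot_iff]
      rintro y ⟨x, rfl⟩
      have hx0 : x = 0 := by
        funext t
        exact (hempty.false t).elim
      rw [hx0, map_zero]
      exact Submodule.zero_mem ⊥
    have huniq : Unique (Idx col 0) := by
      refine ⟨⟨⟨∅, brFaces_of_card_lt col (by rw [Finset.card_empty]; omega), Finset.card_empty⟩⟩,
        fun t => ?_⟩
      exact Subtype.ext (Finset.card_eq_zero.mp t.2.2)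
    exact ⟨(Submodule.quotEquivOfEqBot _ hbot).trans (LinearEquiv.funUnique (Idx col 0) k k)⟩
  · -- r = e + 2 : homology is one-dimensional
    rintro e rfl
    have hAne : A.Nonempty := Finset.card_pos.mp (by omega)
    have ht₀val : BrFaces col (A.erase (A.min' hAne)) ∧ (A.erase (A.min' hAne)).card = e+1 := by
      have hc : (A.erase (A.min' hAne)).card = e + 1 := by
        rw [Finset.card_erase_of_mem (A.min'_mem hAne), hAcard]
        omega
      exact ⟨brFaces_of_card_lt col (by rw [hc]; omega), hc⟩
    set t₀ : Idx col (e+1) := ⟨A.erase (A.min' hAne), ht₀val⟩ with ht₀def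
    set K := LinearMap.ker (simplicialBoundary k (BrFaces col) e) with hKdef
    set N := Submodule.comap K.subtype
      (LinearMap.range (simplicialBoundary k (BrFaces col) (e + 1))) with hNdef
    set γ : K →ₗ[k] k :=
      ((LinearMap.proj t₀).comp (PhiL k col anch Lfull e)).comp K.subtype with hγdef
    have hγrange : ∀ x : K, (x : simplicialChains k (BrFaces col) (e+1)) ∈
        LinearMap.range (simplicialBoundary k (BrFaces col) (e + 1)) → γ x = 0 := by
      rintro x ⟨y, hy⟩
      have hcomm := phiL_boundary_comm k col anch Lfull e y
      rw [hγdef]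
      simp only [LinearMap.comp_apply, Submodule.subtype_apply]
      rw [← hy, ← hcomm, hPhiTop (e+1) rfl y, map_zero]
      rfl
    have hγker : ∀ x : K, γ x = 0 → x ∈ N := by
      intro x hγx
      obtain ⟨hc1, hc2⟩ := phiL_cycle_range k col anch Lfull e
        (x : simplicialChains k (BrFaces col) (e+1)) x.2
      have hconst := supp_cycle_eq_zeta k col A e hAcard rfl hAne
        (PhiL k col anch Lfull e (x : simplicialChains k (BrFaces col) (e+1))) hc1
        (hsupA e (by omega) _) t₀ rfl
      have hz0 : PhiL k col anch Lfull e (x : simplicialChains k (BrFaces col) (e+1)) = 0 := by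
        rw [hconst]
        have : PhiL k col anch Lfull e (x : simplicialChains k (BrFaces col) (e+1)) t₀ = γ x := rfl
        rw [this, hγx, zero_smul]
      rw [hz0, sub_zero] at hc2
      exact hc2
    have hNker : N ≤ LinearMap.ker γ := fun x hx => hγrange x (Submodule.mem_comap.mp hx)
    have hζcycle : simplicialBoundary k (BrFaces col) e (zeta k col A e) = 0 :=
      zeta_cycle k col A e hAcard rfl
    set ζK : K := ⟨zeta k col A e, hζcycle⟩ with hζKdef
    have hfixζ : ∀ L : List V, (∀ u ∈ L, u ∉ A) →
        PhiL k col anch L e (zeta k col A e) = zeta k col A e := by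
      intro L
      induction L with
      | nil => intro _; rfl
      | cons u L ih =>
        intro hL
        rw [phiL_cons, LinearMap.comp_apply, ih (fun v hv => hL v (List.mem_cons_of_mem u hv))]
        unfold zeta
        rw [map_sum]
        refine Finset.sum_congr rfl (fun b hb => ?_)
        rw [map_smul, fold_fix k col u (anch u) (hanchcol _)
          (fun h => hL u (List.mem_cons_self) (by rw [h]; exact hanchmem (col u)))
          e (by omega) (A.erase b)
          (brFaces_of_card_lt col (by rw [Finset.card_erase_of_mem hb, hAcard]; omega))
          (by rw [Finset.card_erase_of_mem hb, hAcard]; omega)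
          (fun h => hL u (List.mem_cons_self) (Finset.mem_of_mem_erase h))]
    have hγζ : γ ζK = 1 := by
      rw [hγdef]
      simp only [LinearMap.comp_apply, Submodule.subtype_apply, hζKdef]
      rw [hfixζ Lfull hLprop]
      rw [LinearMap.proj_apply]
      rw [zeta_coeff k col A e (A.min'_mem hAne) t₀ rfl]
      rw [filter_lt_min_zero hAne (subset_refl A), pow_zero]
    set β := Submodule.liftQ N γ hNker with hβdef
    have hinj : Function.Injective β := by
      rw [← LinearMap.ker_eq_bot, hβdef]
      exact Submodule.ker_liftQ_eq_bot N γ hNker (fun x hx => hγker x hx)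
    have hsurj : Function.Surjective β := by
      rw [← LinearMap.range_eq_top, hβdef, Submodule.range_liftQ]
      rw [LinearMap.range_eq_top]
      intro c
      refine ⟨c • ζK, ?_⟩
      rw [map_smul, hγζ, smul_eq_mul, mul_one]
    exact ⟨LinearEquiv.ofBijective β ⟨hinj, hsurj⟩⟩
end

section
/- (Proposition 3.4, localized form.) Let M be a finitely generated S-module admitting a virtual resolution (in localized form) F_• of length ℓ, and let f ∈ S be such that the annihilator Ann_M(f) = {m ∈ M : f·m = 0} is irrelevant, i.e., (Ann_M(f))_P = 0 for every relevant prime P. Then the mapping cone of the chain map F_• → F_• given by multiplication by f — a bounded complex of finitely generated free S-modules of length ℓ + 1 — is a virtual resolution (in localized form) of M/fM: for every relevant prime P its localization at P has vanishing homology in all positive degrees and zeroth homology isomorphic to (M/fM)_P. -/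
/-- The polynomial ring `S = k[x₁,…,xₙ]`. -/
abbrev PolyRing (k : Type) [Field k] (n : ℕ) : Type := MvPolynomial (Fin n) k

/-- The degree-`i` term of the mapping cone of the multiplication-by-`f` chain map on a
complex of finitely generated free modules with ranks `rk : ℤ → ℕ`:
`Cone_i = F_i ⊕ F_{i-1}`. -/
abbrev MulCone (k : Type) [Field k] (n : ℕ) (rk : ℤ → ℕ) (i : ℤ) : Type :=
  (Fin (rk i) → PolyRing k n) × (Fin (rk (i - 1)) → PolyRing k n)

/-- The differential of the mapping cone of the multiplication-by-`f` chain map on the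
complex `(rk, d)`:  `∂(x, y) = (d x + f • y, -d y)`. -/
noncomputable def mulConeD {k : Type} [Field k] {n : ℕ} (f : PolyRing k n) (rk : ℤ → ℕ)
    (d : ∀ i : ℤ, (Fin (rk (i + 1)) → PolyRing k n) →ₗ[PolyRing k n]
      (Fin (rk i) → PolyRing k n)) (i : ℤ) :
    MulCone k n rk (i + 1) →ₗ[PolyRing k n] MulCone k n rk i :=
  LinearMap.prod
    ((d i).comp (LinearMap.fst _ _ _) +
      f • ((LinearMap.funLeft (PolyRing k n) (PolyRing k n)
        (finCongr (congrArg rk (show i = i + 1 - 1 by omega)))).comp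
          (LinearMap.snd _ _ _)))
    (-((d (i - 1)).comp ((LinearMap.funLeft (PolyRing k n) (PolyRing k n)
        (finCongr (congrArg rk (show i - 1 + 1 = i + 1 - 1 by omega)))).comp
          (LinearMap.snd _ _ _))))

section Helpers

section Helpers
open LocalizedModule
variable {R : Type*} [CommRing R] (σ : Submonoid R)
variable {X Y : Type*} [AddCommGroup X] [Module R X] [AddCommGroup Y] [Module R Y]

theorem VR.mk_eq_zero {x : X} {s : σ} :
    (LocalizedModule.mk x s = (0 : LocalizedModule σ X)) ↔ ∃ u : σ, u • x = 0 := by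
  rw [← LocalizedModule.zero_mk (1 : σ), LocalizedModule.mk_eq]
  simp

theorem VR.mk_add_mk_same {x y : X} {s : σ} :
    (mk x s + mk y s : LocalizedModule σ X) = mk (x + y) s := by
  rw [mk_add_mk, ← smul_add, mk_cancel_common_left]

theorem VR.locSubsingleton [Subsingleton X] : Subsingleton (LocalizedModule σ X) := by
  constructor
  intro a b
  induction a using induction_on with | _ x s =>
  induction b using induction_on with | _ y t =>
  rw [Subsingleton.elim x 0, Subsingleton.elim y 0, zero_mk, zero_mk]

theorem VR.prod_eq_zero {z : LocalizedModule σ (X × Y)}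
    (h1 : LocalizedModule.map σ (LinearMap.fst R X Y) z = 0)
    (h2 : LocalizedModule.map σ (LinearMap.snd R X Y) z = 0) : z = 0 := by
  induction z using LocalizedModule.induction_on with | _ p s =>
  obtain ⟨x, y⟩ := p
  rw [LocalizedModule.map_mk] at h1 h2
  obtain ⟨u, hu⟩ := (VR.mk_eq_zero σ).mp h1
  obtain ⟨v, hv⟩ := (VR.mk_eq_zero σ).mp h2
  simp only [LinearMap.fst_apply] at hu
  simp only [LinearMap.snd_apply] at hv
  have hx : (v * u) • x = 0 := by rw [mul_smul, hu, smul_zero]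
  have hy : (v * u) • y = 0 := by rw [mul_comm, mul_smul, hv, smul_zero]
  refine (VR.mk_eq_zero σ).mpr ⟨v * u, Prod.ext ?_ ?_⟩
  · simp only [Prod.smul_fst, Prod.fst_zero]; exact hx
  · simp only [Prod.smul_snd, Prod.snd_zero]; exact hy

theorem VR.prod_eq {z w : LocalizedModule σ (X × Y)}
    (h1 : LocalizedModule.map σ (LinearMap.fst R X Y) z =
      LocalizedModule.map σ (LinearMap.fst R X Y) w)
    (h2 : LocalizedModule.map σ (LinearMap.snd R X Y) z =
      LocalizedModule.map σ (LinearMap.snd R X Y) w) : z = w := by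
  have := VR.prod_eq_zero σ (z := z - w) (by rw [map_sub, h1, sub_self])
    (by rw [map_sub, h2, sub_self])
  exact sub_eq_zero.mp this

theorem VR.prod_surj (a : LocalizedModule σ X) (b : LocalizedModule σ Y) :
    ∃ z : LocalizedModule σ (X × Y),
      LocalizedModule.map σ (LinearMap.fst R X Y) z = a ∧
      LocalizedModule.map σ (LinearMap.snd R X Y) z = b := by
  induction a using induction_on with | _ x s =>
  induction b using induction_on with | _ y t =>
  refine ⟨LocalizedModule.mk (t • x, s • y) (s * t), ?_, ?_⟩
  · rw [LocalizedModule.map_mk]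
    simp
  · rw [LocalizedModule.map_mk]
    simp

-- test smul of tower through A-linear maps
example (g : LocalizedModule σ X →ₗ[Localization σ] LocalizedModule σ Y) (r : R)
    (ζ : LocalizedModule σ X) : g (r • ζ) = r • g ζ :=
  g.map_smul_of_tower r ζ

example (r : R) (x : X) (s : σ) :
    r • (LocalizedModule.mk x s) = LocalizedModule.mk (r • x) s := smul'_mk r x s

end Helpers
noncomputable def VR.rcast {R : Type*} [CommRing R] (rk : ℤ → ℕ) {i j : ℤ} (h : i = j) :
    (Fin (rk j) → R) →ₗ[R] (Fin (rk i) → R) :=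
  LinearMap.funLeft R R (finCongr (congrArg rk h))

theorem VR.rcast_rcast {R : Type*} [CommRing R] (rk : ℤ → ℕ) {i j l : ℤ} (h : i = j)
    (h' : j = l) (v : Fin (rk l) → R) :
    VR.rcast rk h (VR.rcast rk h' v) = VR.rcast rk (h.trans h') v := rfl

theorem VR.rcast_refl {R : Type*} [CommRing R] (rk : ℤ → ℕ) {i : ℤ} (h : i = i)
    (v : Fin (rk i) → R) : VR.rcast rk h v = v := rfl

theorem VR.d_cast {R : Type*} [CommRing R] (rk : ℤ → ℕ)
    (d : ∀ i : ℤ, (Fin (rk (i + 1)) → R) →ₗ[R] (Fin (rk i) → R)) {i j : ℤ}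
    (h : j = i) (h' : j + 1 = i + 1) (v : Fin (rk (i + 1)) → R) :
    d j (VR.rcast rk h' v) = VR.rcast rk h (d i v) := by subst h; rfl

section Loc
variable {R : Type*} [CommRing R] (σ : Submonoid R) (rk : ℤ → ℕ)

theorem VR.LRcast_LRcast {i j l : ℤ} (h : i = j) (h' : j = l)
    (ζ : LocalizedModule σ (Fin (rk l) → R)) :
    LocalizedModule.map σ (VR.rcast rk h) (LocalizedModule.map σ (VR.rcast rk h') ζ) =
      LocalizedModule.map σ (VR.rcast rk (h.trans h')) ζ := by
  induction ζ using LocalizedModule.induction_on with | _ v s =>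
  rw [LocalizedModule.map_mk, LocalizedModule.map_mk, LocalizedModule.map_mk]
  rfl

theorem VR.LRcast_refl {i : ℤ} (h : i = i) (ζ : LocalizedModule σ (Fin (rk i) → R)) :
    LocalizedModule.map σ (VR.rcast rk h) ζ = ζ := by
  induction ζ using LocalizedModule.induction_on with | _ v s =>
  rw [LocalizedModule.map_mk]
  rfl

theorem VR.LD_cast (d : ∀ i : ℤ, (Fin (rk (i + 1)) → R) →ₗ[R] (Fin (rk i) → R)) {i j : ℤ}
    (h : j = i) (h' : j + 1 = i + 1) (ζ : LocalizedModule σ (Fin (rk (i + 1)) → R)) :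
    LocalizedModule.map σ (d j) (LocalizedModule.map σ (VR.rcast rk h') ζ) =
      LocalizedModule.map σ (VR.rcast rk h) (LocalizedModule.map σ (d i) ζ) := by
  induction ζ using LocalizedModule.induction_on with | _ v s =>
  rw [LocalizedModule.map_mk, LocalizedModule.map_mk, LocalizedModule.map_mk,
    LocalizedModule.map_mk, VR.d_cast]

end Loc

theorem VR.coneD_apply {k : Type} [Field k] {n : ℕ} (f : PolyRing k n) (rk : ℤ → ℕ)
    (d : ∀ i : ℤ, (Fin (rk (i + 1)) → PolyRing k n) →ₗ[PolyRing k n]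
      (Fin (rk i) → PolyRing k n)) (i : ℤ)
    (x : Fin (rk (i + 1)) → PolyRing k n) (y : Fin (rk (i + 1 - 1)) → PolyRing k n)
    (h1 : i = i + 1 - 1) (h2 : i - 1 + 1 = i + 1 - 1) :
    mulConeD f rk d i (x, y) =
      (d i x + f • VR.rcast rk h1 y, -(d (i - 1) (VR.rcast rk h2 y))) := rfl

section ConeHelpers
variable {k : Type} [Field k] {n : ℕ}

theorem VR.cone_sq (f : PolyRing k n) (rk : ℤ → ℕ)
    (d : ∀ i : ℤ, (Fin (rk (i + 1)) → PolyRing k n) →ₗ[PolyRing k n]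
      (Fin (rk i) → PolyRing k n))
    (hcx : ∀ i : ℤ, d i ∘ₗ d (i + 1) = 0) (i : ℤ) (c : MulCone k n rk (i + 1 + 1)) :
    mulConeD f rk d i (mulConeD f rk d (i + 1) c) = 0 := by
  obtain ⟨x, y⟩ := c
  have hc : ∀ (j : ℤ) (v : Fin (rk (j + 1 + 1)) → PolyRing k n), d j (d (j + 1) v) = 0 := by
    intro j v
    have := DFunLike.congr_fun (hcx j) v
    simpa using this
  rw [VR.coneD_apply f rk d (i + 1) x y (by omega) (by omega),
    VR.coneD_apply f rk d i _ _ (by omega) (by omega)]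
  have e1 : VR.rcast rk (show i + 1 - 1 + 1 = i + 1 + 1 - 1 by omega) y =
      VR.rcast rk (show i + 1 - 1 + 1 = i + 1 by omega)
        (VR.rcast rk (show i + 1 = i + 1 + 1 - 1 by omega) y) := rfl
  rw [e1, VR.d_cast rk d (show i + 1 - 1 = i by omega) (show i + 1 - 1 + 1 = i + 1 by omega)]
  refine Prod.ext ?_ ?_
  · show d i (d (i + 1) x + f • VR.rcast rk (show i + 1 = i + 1 + 1 - 1 by omega) y) +
      f • VR.rcast rk (show i = i + 1 - 1 by omega)
        (-(VR.rcast rk (show i + 1 - 1 = i by omega)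
          (d i (VR.rcast rk (show i + 1 = i + 1 + 1 - 1 by omega) y)))) = (0 : _ × _).1
    rw [map_add, map_smul, hc i x, zero_add, map_neg]
    have e2 : VR.rcast rk (show i = i + 1 - 1 by omega)
        (VR.rcast rk (show i + 1 - 1 = i by omega)
          (d i (VR.rcast rk (show i + 1 = i + 1 + 1 - 1 by omega) y))) =
        d i (VR.rcast rk (show i + 1 = i + 1 + 1 - 1 by omega) y) := rfl
    rw [e2, smul_neg, add_neg_cancel]
    rfl
  · show -(d (i - 1) (VR.rcast rk (show i - 1 + 1 = i + 1 - 1 by omega)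
      (-(VR.rcast rk (show i + 1 - 1 = i by omega)
        (d i (VR.rcast rk (show i + 1 = i + 1 + 1 - 1 by omega) y)))))) = (0 : _ × _).2
    rw [map_neg, map_neg, neg_neg]
    have e3 : VR.rcast rk (show i - 1 + 1 = i + 1 - 1 by omega)
        (VR.rcast rk (show i + 1 - 1 = i by omega)
          (d i (VR.rcast rk (show i + 1 = i + 1 + 1 - 1 by omega) y))) =
        VR.rcast rk (show i - 1 + 1 = i by omega)
          (d i (VR.rcast rk (show i + 1 = i + 1 + 1 - 1 by omega) y)) := rfl
    rw [e3, ← VR.d_cast rk d (show i - 1 + 1 = i by omega)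
      (show i - 1 + 1 + 1 = i + 1 by omega), hc (i - 1)]
    rfl

variable (σ : Submonoid (PolyRing k n)) (f : PolyRing k n) (rk : ℤ → ℕ)
    (d : ∀ i : ℤ, (Fin (rk (i + 1)) → PolyRing k n) →ₗ[PolyRing k n]
      (Fin (rk i) → PolyRing k n))

theorem VR.LconeD_fst (i : ℤ) (h1 : i = i + 1 - 1)
    (z : LocalizedModule σ (MulCone k n rk (i + 1))) :
    LocalizedModule.map σ
        (LinearMap.fst (PolyRing k n) (Fin (rk i) → PolyRing k n)
          (Fin (rk (i - 1)) → PolyRing k n))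
        (LocalizedModule.map σ (mulConeD f rk d i) z) =
      LocalizedModule.map σ (d i)
          (LocalizedModule.map σ
            (LinearMap.fst (PolyRing k n) (Fin (rk (i + 1)) → PolyRing k n)
              (Fin (rk (i + 1 - 1)) → PolyRing k n)) z)
        + f • LocalizedModule.map σ (VR.rcast rk h1)
            (LocalizedModule.map σ
              (LinearMap.snd (PolyRing k n) (Fin (rk (i + 1)) → PolyRing k n)
                (Fin (rk (i + 1 - 1)) → PolyRing k n)) z) := by
  induction z using LocalizedModule.induction_on with | _ c s =>
  obtain ⟨x, y⟩ := c
  rw [LocalizedModule.map_mk, LocalizedModule.map_mk, LocalizedModule.map_mk,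
    LocalizedModule.map_mk, LocalizedModule.map_mk, LocalizedModule.map_mk,
    LocalizedModule.smul'_mk, VR.mk_add_mk_same, VR.coneD_apply f rk d i x y h1 (by omega)]
  rfl

theorem VR.LconeD_snd (i : ℤ) (h2 : i - 1 + 1 = i + 1 - 1)
    (z : LocalizedModule σ (MulCone k n rk (i + 1))) :
    LocalizedModule.map σ
        (LinearMap.snd (PolyRing k n) (Fin (rk i) → PolyRing k n)
          (Fin (rk (i - 1)) → PolyRing k n))
        (LocalizedModule.map σ (mulConeD f rk d i) z) =
      -(LocalizedModule.map σ (d (i - 1))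
          (LocalizedModule.map σ (VR.rcast rk h2)
            (LocalizedModule.map σ
              (LinearMap.snd (PolyRing k n) (Fin (rk (i + 1)) → PolyRing k n)
                (Fin (rk (i + 1 - 1)) → PolyRing k n)) z))) := by
  induction z using LocalizedModule.induction_on with | _ c s =>
  obtain ⟨x, y⟩ := c
  rw [LocalizedModule.map_mk, LocalizedModule.map_mk, LocalizedModule.map_mk,
    LocalizedModule.map_mk, LocalizedModule.map_mk, ← LocalizedModule.mk_neg,
    VR.coneD_apply f rk d i x y (by omega) h2]
  rfl

end ConeHelpers
end Helpers

open LocalizedModule in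
theorem VR.fsmul_quot {R : Type*} [CommRing R] (σ : Submonoid R) (M : Type*)
    [AddCommGroup M] [Module R M] (f : R)
    (ζ : LocalizedModule σ (M ⧸ LinearMap.range (LinearMap.lsmul R M f))) : f • ζ = 0 := by
  induction ζ using LocalizedModule.induction_on with | _ q s =>
  obtain ⟨m, rfl⟩ := Submodule.mkQ_surjective _ q
  rw [LocalizedModule.smul'_mk]
  refine (VR.mk_eq_zero σ).mpr ⟨1, ?_⟩
  rw [one_smul, ← map_smul, Submodule.mkQ_apply, Submodule.Quotient.mk_eq_zero]
  exact ⟨m, rfl⟩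

theorem VR.ker_map_mkQ {R : Type*} [CommRing R] (σ : Submonoid R) {M : Type*}
    [AddCommGroup M] [Module R M] (f : R) (ζ : LocalizedModule σ M)
    (h : LocalizedModule.map σ (LinearMap.range (LinearMap.lsmul R M f)).mkQ ζ = 0) :
    ∃ m0, f • m0 = ζ := by
  induction ζ using LocalizedModule.induction_on with | _ m s =>
  rw [LocalizedModule.map_mk] at h
  obtain ⟨u, hu⟩ := (VR.mk_eq_zero σ).mp h
  rw [Submonoid.smul_def, ← map_smul, Submodule.mkQ_apply, Submodule.Quotient.mk_eq_zero] at hu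
  obtain ⟨m', hm'⟩ := hu
  refine ⟨LocalizedModule.mk m' (u * s), ?_⟩
  rw [LocalizedModule.smul'_mk]
  have : f • m' = (u : R) • m := hm'
  rw [this, ← Submonoid.smul_def, LocalizedModule.mk_cancel_common_left u s m]

theorem VR.finjAux {R : Type*} [CommRing R] (σ : Submonoid R) (M : Type*) [AddCommGroup M]
    [Module R M] (f : R) (hann : Subsingleton (LocalizedModule σ
      (LinearMap.ker (LinearMap.lsmul R M f)))) :
    ∀ m : LocalizedModule σ M, f • m = 0 → m = 0 := by
  intro m hm
  induction m using LocalizedModule.induction_on with | _ m s =>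
  rw [LocalizedModule.smul'_mk] at hm
  obtain ⟨u, hu⟩ := (VR.mk_eq_zero σ).mp hm
  have hmem : (u : R) • m ∈ LinearMap.ker (LinearMap.lsmul R M f) := by
    rw [LinearMap.mem_ker, LinearMap.lsmul_apply, smul_comm]
    rw [Submonoid.smul_def] at hu
    rw [hu]
  have h0 : (LocalizedModule.mk (⟨_, hmem⟩ : LinearMap.ker (LinearMap.lsmul R M f)) 1 :
      LocalizedModule σ _) = 0 := Subsingleton.elim _ _
  obtain ⟨v, hv⟩ := (VR.mk_eq_zero σ).mp h0
  refine (VR.mk_eq_zero σ).mpr ⟨v * u, ?_⟩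
  have hv' := congrArg Subtype.val hv
  simp only [Submonoid.smul_def, SetLike.val_smul, ZeroMemClass.coe_zero] at hv'
  rw [mul_smul, Submonoid.smul_def, Submonoid.smul_def, hv']



section
variable {k : Type} [Field k] {n : ℕ}
  (M : Type) [AddCommGroup M] [Module (PolyRing k n) M]
  (rk : ℤ → ℕ)
  (d : ∀ i : ℤ, (Fin (rk (i + 1)) → PolyRing k n) →ₗ[PolyRing k n]
      (Fin (rk i) → PolyRing k n))
  (f : PolyRing k n)
  (σ : Submonoid (PolyRing k n))
  (hcx : ∀ i : ℤ, d i ∘ₗ d (i + 1) = 0)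
  (hexact : ∀ i : ℤ, 0 ≤ i →
        LinearMap.ker (LocalizedModule.map σ (d i)) =
          LinearMap.range (LocalizedModule.map σ (d (i + 1))))
  (ψ : (LocalizedModule σ (Fin (rk 0) → PolyRing k n) ⧸
          LinearMap.range (LocalizedModule.map σ (d 0)))
        ≃ₗ[Localization σ] LocalizedModule σ M)
  (finj : ∀ m : LocalizedModule σ M, f • m = 0 → m = 0)
  (hlen0 : rk (0 - 1 : ℤ) = 0)

include hcx hexact finj ψ in
set_option maxHeartbeats 4000000 in
theorem testExact : ∀ i : ℤ, 0 ≤ i →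
    LinearMap.ker (LocalizedModule.map σ (mulConeD f rk d i)) =
      LinearMap.range (LocalizedModule.map σ (mulConeD f rk d (i + 1))) := by
  intro i hi
  apply le_antisymm
  · -- ker ⊆ range
    intro z hz
    rw [LinearMap.mem_ker] at hz
    have pf1 : i = i + 1 - 1 := by omega
    have pf2 : i - 1 + 1 = i + 1 - 1 := by omega
    have e1 := VR.LconeD_fst σ f rk d i pf1 z
    have e2 := VR.LconeD_snd σ f rk d i pf2 z
    rw [hz, map_zero] at e1 e2
    replace e2 : LocalizedModule.map σ (d (i - 1))
        (LocalizedModule.map σ (VR.rcast rk pf2)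
          (LocalizedModule.map σ
            (LinearMap.snd (PolyRing k n) (Fin (rk (i + 1)) → PolyRing k n)
              (Fin (rk (i + 1 - 1)) → PolyRing k n)) z)) = 0 := neg_eq_zero.mp e2.symm
    have step1 : ∃ ω : LocalizedModule σ (Fin (rk (i + 1)) → PolyRing k n),
        LocalizedModule.map σ (d i) ω =
          LocalizedModule.map σ (VR.rcast rk pf1)
            (LocalizedModule.map σ
              (LinearMap.snd (PolyRing k n) (Fin (rk (i + 1)) → PolyRing k n)
                (Fin (rk (i + 1 - 1)) → PolyRing k n)) z) := by
      rcases eq_or_lt_of_le hi with hi0 | hpos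
      · subst hi0
        have h4 : (LinearMap.range (LocalizedModule.map σ (d 0))).mkQ
            (LocalizedModule.map σ (d 0)
              (LocalizedModule.map σ
                (LinearMap.fst (PolyRing k n) (Fin (rk (0 + 1)) → PolyRing k n)
                  (Fin (rk (0 + 1 - 1)) → PolyRing k n)) z)) = 0 := by
          rw [Submodule.mkQ_apply, Submodule.Quotient.mk_eq_zero]
          exact LinearMap.mem_range_self _ _
        have h5 := congrArg (LinearMap.range (LocalizedModule.map σ (d 0))).mkQ e1.symm
        simp only [map_add, h4, zero_add, map_zero, LinearMap.map_smul_of_tower] at h5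
        have h6 : f • ψ ((LinearMap.range (LocalizedModule.map σ (d 0))).mkQ
            (LocalizedModule.map σ (VR.rcast rk pf1)
              (LocalizedModule.map σ
                (LinearMap.snd (PolyRing k n) (Fin (rk (0 + 1)) → PolyRing k n)
                  (Fin (rk (0 + 1 - 1)) → PolyRing k n)) z))) = 0 := by
          have hcomm := ψ.toLinearMap.map_smul_of_tower f
            ((LinearMap.range (LocalizedModule.map σ (d 0))).mkQ
              (LocalizedModule.map σ (VR.rcast rk pf1)
                (LocalizedModule.map σ
                  (LinearMap.snd (PolyRing k n) (Fin (rk (0 + 1)) → PolyRing k n)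
                    (Fin (rk (0 + 1 - 1)) → PolyRing k n)) z)))
          simp only [LinearEquiv.coe_coe] at hcomm
          rw [← hcomm, h5, map_zero]
        have h7 := finj _ h6
        have h8 : (LinearMap.range (LocalizedModule.map σ (d 0))).mkQ
            (LocalizedModule.map σ (VR.rcast rk pf1)
              (LocalizedModule.map σ
                (LinearMap.snd (PolyRing k n) (Fin (rk (0 + 1)) → PolyRing k n)
                  (Fin (rk (0 + 1 - 1)) → PolyRing k n)) z)) = 0 := by
          have := ψ.map_eq_zero_iff.mp h7
          exact this
        rwa [Submodule.mkQ_apply, Submodule.Quotient.mk_eq_zero] at h8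
      · have hmem : LocalizedModule.map σ (VR.rcast rk pf2)
            (LocalizedModule.map σ
              (LinearMap.snd (PolyRing k n) (Fin (rk (i + 1)) → PolyRing k n)
                (Fin (rk (i + 1 - 1)) → PolyRing k n)) z) ∈
            LinearMap.ker (LocalizedModule.map σ (d (i - 1))) := e2
        rw [hexact (i - 1) (by omega)] at hmem
        obtain ⟨ω', hω'⟩ := hmem
        have pf3 : i = i - 1 + 1 := by omega
        have pf4 : i + 1 = i - 1 + 1 + 1 := by omega
        refine ⟨LocalizedModule.map σ (VR.rcast rk pf4) ω', ?_⟩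
        rw [VR.LD_cast σ rk d pf3 pf4 ω', hω', VR.LRcast_LRcast]
    obtain ⟨ω, hω⟩ := step1
    have hker2 : LocalizedModule.map σ (d i)
        (LocalizedModule.map σ
          (LinearMap.fst (PolyRing k n) (Fin (rk (i + 1)) → PolyRing k n)
            (Fin (rk (i + 1 - 1)) → PolyRing k n)) z + f • ω) = 0 := by
      rw [map_add, LinearMap.map_smul_of_tower, hω]
      exact e1.symm
    have hmem2 : _ ∈ LinearMap.ker (LocalizedModule.map σ (d i)) := hker2
    rw [hexact i hi] at hmem2
    obtain ⟨v, hv⟩ := hmem2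
    have pf5 : i + 1 = i + 1 + 1 - 1 := by omega
    have pf6 : i + 1 + 1 - 1 = i + 1 := by omega
    obtain ⟨w, hw1, hw2⟩ := VR.prod_surj σ v
      (LocalizedModule.map σ (VR.rcast rk pf6) (-ω))
    refine ⟨w, ?_⟩
    apply VR.prod_eq σ
    · rw [VR.LconeD_fst σ f rk d (i + 1) pf5 w, hw1, hw2, VR.LRcast_LRcast, hv,
        VR.LRcast_refl, smul_neg, add_neg_cancel_right]
    · have pf7 : i + 1 - 1 + 1 = i + 1 + 1 - 1 := by omega
      have pf8 : i + 1 - 1 = i := by omega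
      have pf9 : i + 1 - 1 + 1 = i + 1 := by omega
      rw [VR.LconeD_snd σ f rk d (i + 1) pf7 w, hw2, VR.LRcast_LRcast]
      have e9 : LocalizedModule.map σ (VR.rcast rk (pf7.trans pf6)) (-ω) =
          LocalizedModule.map σ (VR.rcast rk pf9) (-ω) := rfl
      rw [e9, VR.LD_cast σ rk d pf8 pf9 (-ω), map_neg, hω, map_neg, neg_neg,
        VR.LRcast_LRcast, VR.LRcast_refl]
  · rintro z ⟨w, rfl⟩
    rw [LinearMap.mem_ker]
    induction w using LocalizedModule.induction_on with | _ c s =>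
    rw [LocalizedModule.map_mk, LocalizedModule.map_mk, VR.cone_sq f rk d hcx i c,
      LocalizedModule.zero_mk]


include hlen0 ψ in
set_option maxHeartbeats 4000000 in
theorem testH0 :
    Nonempty ((LocalizedModule σ (MulCone k n rk 0) ⧸
        LinearMap.range (LocalizedModule.map σ (mulConeD f rk d 0)))
      ≃ₗ[Localization σ] LocalizedModule σ
        (M ⧸ LinearMap.range (LinearMap.lsmul (PolyRing k n) M f))) := by
  have pfa : (0 : ℤ) = 0 + 1 - 1 := by omega
  set Φ : LocalizedModule σ (MulCone k n rk 0) →ₗ[Localization σ]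
      LocalizedModule σ (M ⧸ LinearMap.range (LinearMap.lsmul (PolyRing k n) M f)) :=
    (LocalizedModule.map σ (LinearMap.range (LinearMap.lsmul (PolyRing k n) M f)).mkQ) ∘ₗ
      ((ψ : _ →ₗ[Localization σ] _) ∘ₗ
        ((LinearMap.range (LocalizedModule.map σ (d 0))).mkQ ∘ₗ
          LocalizedModule.map σ (LinearMap.fst (PolyRing k n)
            (Fin (rk (0 : ℤ)) → PolyRing k n) (Fin (rk (0 - 1 : ℤ)) → PolyRing k n)))) with hΦ
  have hsurj : Function.Surjective Φ := by
    intro t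
    obtain ⟨t', ht'⟩ := LocalizedModule.map_surjective σ
      (LinearMap.range (LinearMap.lsmul (PolyRing k n) M f)).mkQ
      (Submodule.mkQ_surjective _) t
    obtain ⟨m1, hm1⟩ := ψ.surjective t'
    obtain ⟨q, hq⟩ := Submodule.mkQ_surjective _ m1
    obtain ⟨zz, hz1, hz2⟩ := VR.prod_surj σ q (0 : LocalizedModule σ (Fin (rk (0 - 1 : ℤ)) → PolyRing k n))
    refine ⟨zz, ?_⟩
    rw [hΦ]
    simp only [LinearMap.coe_comp, Function.comp_apply, LinearEquiv.coe_coe]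
    rw [hz1, hq, hm1, ht']
  have hker : LinearMap.range (LocalizedModule.map σ (mulConeD f rk d 0)) =
      LinearMap.ker Φ := by
    apply le_antisymm
    · rintro t ⟨w, rfl⟩
      rw [LinearMap.mem_ker, hΦ]
      simp only [LinearMap.coe_comp, Function.comp_apply, LinearEquiv.coe_coe]
      rw [VR.LconeD_fst σ f rk d 0 pfa w, map_add]
      rw [show (LinearMap.range (LocalizedModule.map σ (d 0))).mkQ
          (LocalizedModule.map σ (d 0)
            (LocalizedModule.map σ (LinearMap.fst (PolyRing k n)
              (Fin (rk (0 + 1)) → PolyRing k n) (Fin (rk (0 + 1 - 1)) → PolyRing k n)) w)) = 0 by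
        rw [Submodule.mkQ_apply, Submodule.Quotient.mk_eq_zero]
        exact LinearMap.mem_range_self _ _]
      simp only [zero_add, LinearMap.map_smul_of_tower]
      have hcomm := ψ.toLinearMap.map_smul_of_tower f
        ((LinearMap.range (LocalizedModule.map σ (d 0))).mkQ
          (LocalizedModule.map σ (VR.rcast rk pfa)
            (LocalizedModule.map σ (LinearMap.snd (PolyRing k n)
              (Fin (rk (0 + 1)) → PolyRing k n) (Fin (rk (0 + 1 - 1)) → PolyRing k n)) w)))
      simp only [LinearEquiv.coe_coe] at hcomm
      rw [hcomm]
      simp only [LinearMap.map_smul_of_tower]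
      exact VR.fsmul_quot σ M f _
    · intro t ht
      rw [LinearMap.mem_ker, hΦ] at ht
      simp only [LinearMap.coe_comp, Function.comp_apply, LinearEquiv.coe_coe] at ht
      obtain ⟨m0, hm0⟩ := VR.ker_map_mkQ σ f _ ht
      obtain ⟨t', ht'⟩ := ψ.surjective m0
      obtain ⟨w0, hw0⟩ := Submodule.mkQ_surjective _ t'
      have h1 : (LinearMap.range (LocalizedModule.map σ (d 0))).mkQ
          (LocalizedModule.map σ (LinearMap.fst (PolyRing k n)
              (Fin (rk (0 : ℤ)) → PolyRing k n) (Fin (rk (0 - 1 : ℤ)) → PolyRing k n)) t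
            - f • w0) = 0 := by
      -- ψ applied is zero
        apply ψ.map_eq_zero_iff.mp
        rw [map_sub, LinearMap.map_smul_of_tower, map_sub]
        have hcomm := ψ.toLinearMap.map_smul_of_tower f
          ((LinearMap.range (LocalizedModule.map σ (d 0))).mkQ w0)
        simp only [LinearEquiv.coe_coe] at hcomm
        rw [hcomm, hw0, ht', hm0, sub_self]
      rw [Submodule.mkQ_apply, Submodule.Quotient.mk_eq_zero] at h1
      obtain ⟨v, hv⟩ := h1
      have pfc : (0 : ℤ) + 1 - 1 = 0 := by omega
      obtain ⟨w, hw1, hw2⟩ := VR.prod_surj σ v (LocalizedModule.map σ (VR.rcast rk pfc) w0)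
      refine ⟨w, ?_⟩
      apply VR.prod_eq σ
      · rw [VR.LconeD_fst σ f rk d 0 pfa w, hw1, hw2, VR.LRcast_LRcast, hv,
          VR.LRcast_refl, sub_add_cancel]
      · haveI : IsEmpty (Fin (rk (0 - 1 : ℤ))) := by rw [hlen0]; infer_instance
        haveI : Subsingleton (LocalizedModule σ (Fin (rk (0 - 1 : ℤ)) → PolyRing k n)) :=
          VR.locSubsingleton σ
        exact Subsingleton.elim _ _
  exact ⟨(Submodule.quotEquivOfEq _ _ hker).trans (Φ.quotKerEquivOfSurjective hsurj)⟩

end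


set_option maxHeartbeats 1000000 in
/-- Proposition 3.4, localized form: if `M` is a finitely generated
module over `S = k[x₁,…,xₙ]` with a virtual resolution (in localized form) `F_•` of
length `ℓ` for the irrelevant ideal `B`, and `f ∈ S` has irrelevant annihilator
`Ann_M(f) = ker (f·)` on `M`, then the mapping cone of the multiplication-by-`f` chain
map `F_• → F_•` is a bounded complex of finitely generated free `S`-modules of length
`ℓ + 1` which is a virtual resolution (in localized form) of `M/fM`: for every relevant
prime `P` its localization has vanishing homology in all positive degrees and zeroth
homology isomorphic to `(M/fM)_P`. -/
theorem mulCone_is_virtual_resolution_of_quotient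
    {k : Type} [Field k] {n : ℕ}
    (B : Ideal (PolyRing k n))
    (M : Type) [AddCommGroup M] [Module (PolyRing k n) M]
    [Module.Finite (PolyRing k n) M]
    (ℓ : ℕ) (rk : ℤ → ℕ)
    (d : ∀ i : ℤ, (Fin (rk (i + 1)) → PolyRing k n) →ₗ[PolyRing k n]
      (Fin (rk i) → PolyRing k n))
    (hlen : ∀ i : ℤ, (i < 0 ∨ (ℓ : ℤ) < i) → rk i = 0)
    (hcx : ∀ i : ℤ, d i ∘ₗ d (i + 1) = 0)
    (hexact : ∀ (P : Ideal (PolyRing k n)) [P.IsPrime], ¬B ≤ P →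
      ∀ i : ℤ, 0 ≤ i →
        LinearMap.ker (LocalizedModule.map P.primeCompl (d i)) =
          LinearMap.range (LocalizedModule.map P.primeCompl (d (i + 1))))
    (hH0 : ∀ (P : Ideal (PolyRing k n)) [P.IsPrime], ¬B ≤ P →
      Nonempty ((LocalizedModule P.primeCompl (Fin (rk 0) → PolyRing k n) ⧸
          LinearMap.range (LocalizedModule.map P.primeCompl (d 0)))
        ≃ₗ[Localization P.primeCompl] LocalizedModule P.primeCompl M))
    (f : PolyRing k n)
    (hann : ∀ (P : Ideal (PolyRing k n)) [P.IsPrime], ¬B ≤ P →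
      Subsingleton (LocalizedModule P.primeCompl
        (LinearMap.ker (LinearMap.lsmul (PolyRing k n) M f)))) :
    (∀ i : ℤ, (i < 0 ∨ (ℓ : ℤ) + 1 < i) → rk i + rk (i - 1) = 0) ∧
    ∀ (P : Ideal (PolyRing k n)) [P.IsPrime], ¬B ≤ P →
      (∀ i : ℤ, 0 ≤ i →
        LinearMap.ker (LocalizedModule.map P.primeCompl (mulConeD f rk d i)) =
          LinearMap.range (LocalizedModule.map P.primeCompl (mulConeD f rk d (i + 1)))) ∧
      Nonempty ((LocalizedModule P.primeCompl (MulCone k n rk 0) ⧸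
          LinearMap.range (LocalizedModule.map P.primeCompl (mulConeD f rk d 0)))
        ≃ₗ[Localization P.primeCompl] LocalizedModule P.primeCompl
          (M ⧸ LinearMap.range (LinearMap.lsmul (PolyRing k n) M f))) := by
  refine ⟨?_, ?_⟩
  · intro i hi
    rcases hi with h | h
    · rw [hlen i (Or.inl h), hlen (i - 1) (Or.inl (by omega))]
    · rw [hlen i (Or.inr (by omega)), hlen (i - 1) (Or.inr (by omega))]
  intro P hP hBP
  haveI := hP
  obtain ⟨ψ⟩ := hH0 P hBP
  have finj := VR.finjAux P.primeCompl M f (hann P hBP)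
  exact ⟨testExact M rk d f P.primeCompl hcx (hexact P hBP) ψ finj,
    testH0 M rk d f P.primeCompl ψ (hlen _ (Or.inl (by omega)))⟩
end

section
/- (Corollary 4.4.) Let M be a finitely generated S-module and ℓ ≥ 0 an integer. Suppose that Ext^ℓ_S(M, S)_P = 0 for every relevant prime P, and that for every finitely generated S-module L one has Ext^{ℓ+1}_S(M, L)_P = 0 for every relevant prime P. Then for every finitely generated S-module N one has Ext^ℓ_S(M, N)_P = 0 for every relevant prime P; that is, Ext^ℓ_S(M, N) is irrelevant for every finitely generated N. -/
open CategoryTheory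
open CategoryTheory Limits

section Generic
variable {R : Type} [CommRing R]

lemma locSub_of_iso (Sm : Submonoid R) {T T' : ModuleCat R} (e : T ≅ T')
    (h : Subsingleton (LocalizedModule Sm T)) :
    Subsingleton (LocalizedModule Sm T') := by
  rw [LocalizedModule.subsingleton_iff] at h ⊢
  intro m
  obtain ⟨r, hr, hr0⟩ := h (e.toLinearEquiv.symm m)
  refine ⟨r, hr, ?_⟩
  have : r • m = e.toLinearEquiv (r • e.toLinearEquiv.symm m) := by
    rw [map_smul, LinearEquiv.apply_symm_apply]
  rw [this, hr0, map_zero]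

lemma locSub_of_exact (Sm : Submonoid R) (σ : ShortComplex (ModuleCat R)) (hex : σ.Exact)
    (h1 : Subsingleton (LocalizedModule Sm σ.X₁))
    (h3 : Subsingleton (LocalizedModule Sm σ.X₃)) :
    Subsingleton (LocalizedModule Sm σ.X₂) := by
  rw [LocalizedModule.subsingleton_iff] at h1 h3 ⊢
  rw [ShortComplex.moduleCat_exact_iff] at hex
  intro t
  obtain ⟨s, hs, hs0⟩ := h3 (σ.g t)
  obtain ⟨a, ha⟩ := hex (s • t) (by rw [map_smul, hs0])
  obtain ⟨s', hs', hs'0⟩ := h1 a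
  refine ⟨s' * s, Sm.mul_mem hs' hs, ?_⟩
  rw [mul_smul, ← ha, ← map_smul, hs'0, map_zero]

lemma locSub_of_subsingleton (Sm : Submonoid R) (T : ModuleCat R) (h : Subsingleton T) :
    Subsingleton (LocalizedModule Sm T) := by
  rw [LocalizedModule.subsingleton_iff]
  intro m
  exact ⟨1, Sm.one_mem, by rw [Subsingleton.elim m 0, smul_zero]⟩

/-- postcomposition as a cochain map -/
noncomputable def mapLY (X : ChainComplex (ModuleCat R) ℕ) {Y Z : ModuleCat R} (f : Y ⟶ Z) :
    X.linearYonedaObj R Y ⟶ X.linearYonedaObj R Z where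
  f i := ModuleCat.ofHom (Linear.rightComp R (X.X i) f)
  comm' i j _ := by
    ext (u : X.X i ⟶ Y)
    show X.d j i ≫ (u ≫ f) = (X.d j i ≫ u) ≫ f
    rw [Category.assoc]

/-- the short complex of cochain complexes obtained by applying Hom(P,-) -/
noncomputable def sigmaC (X : ChainComplex (ModuleCat R) ℕ) (S' : ShortComplex (ModuleCat R)) :
    ShortComplex (CochainComplex (ModuleCat R) ℕ) :=
  ShortComplex.mk (mapLY X S'.f) (mapLY X S'.g) (by
    ext i (u : X.X i ⟶ S'.X₁)
    show (u ≫ S'.f) ≫ S'.g = ((0 : (X.linearYonedaObj R S'.X₁ ⟶ X.linearYonedaObj R S'.X₃)).f i).hom u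
    rw [HomologicalComplex.zero_f_apply]
    show (u ≫ S'.f) ≫ S'.g = (0 : X.X i ⟶ S'.X₃)
    rw [Category.assoc, S'.zero, comp_zero])

lemma sigmaC_shortExact (X : ChainComplex (ModuleCat R) ℕ) [∀ i, Projective (X.X i)]
    (S' : ShortComplex (ModuleCat R)) (hS' : S'.ShortExact) :
    (sigmaC X S').ShortExact := by
  rw [HomologicalComplex.shortExact_iff_degreewise_shortExact]
  intro i
  haveI := hS'.mono_f
  haveI := hS'.epi_g
  haveI : Mono (((sigmaC X S').map (HomologicalComplex.eval _ _ i)).f) := by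
    rw [ModuleCat.mono_iff_injective]
    intro u v huv
    have : (u : X.X i ⟶ S'.X₁) ≫ S'.f = (v : X.X i ⟶ S'.X₁) ≫ S'.f := huv
    exact (cancel_mono S'.f).1 this
  haveI : Epi (((sigmaC X S').map (HomologicalComplex.eval _ _ i)).g) := by
    rw [ModuleCat.epi_iff_surjective]
    intro (u : X.X i ⟶ S'.X₃)
    exact ⟨Projective.factorThru u S'.g, Projective.factorThru_comp u S'.g⟩
  refine ShortComplex.ShortExact.mk ?_
  rw [ShortComplex.moduleCat_exact_iff]
  intro (u : X.X i ⟶ S'.X₂) hu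
  refine ⟨hS'.exact.lift u hu, hS'.exact.lift_f u hu⟩

end Generic

theorem general_ext_step {R : Type} [CommRing R] [IsNoetherianRing R] (B : Ideal R)
    (M : Type) [AddCommGroup M] [Module R M] [Module.Finite R M] (ℓ : ℕ)
    (hS : ∀ (P : Ideal R) [P.IsPrime], ¬B ≤ P →
      Subsingleton (LocalizedModule P.primeCompl
        (((Ext R (ModuleCat R) ℓ).obj (Opposite.op (ModuleCat.of R M))).obj (ModuleCat.of R R))))
    (hL : ∀ (L : Type) [AddCommGroup L] [Module R L] [Module.Finite R L],
      ∀ (P : Ideal R) [P.IsPrime], ¬B ≤ P →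
        Subsingleton (LocalizedModule P.primeCompl
          (((Ext R (ModuleCat R) (ℓ + 1)).obj (Opposite.op (ModuleCat.of R M))).obj
            (ModuleCat.of R L)))) :
    ∀ (N : Type) [AddCommGroup N] [Module R N] [Module.Finite R N],
      ∀ (P : Ideal R) [P.IsPrime], ¬B ≤ P →
        Subsingleton (LocalizedModule P.primeCompl
          (((Ext R (ModuleCat R) ℓ).obj (Opposite.op (ModuleCat.of R M))).obj
            (ModuleCat.of R N))) := by
  classical
  let P : ProjectiveResolution (ModuleCat.of R M) := ProjectiveResolution.of _
  haveI : ∀ i, Projective (P.complex.X i) := P.projective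
  -- vanishing predicate at the level of homology of Hom(P, Y)
  let Van : ℕ → ModuleCat R → Prop := fun j Y =>
    ∀ (Pr : Ideal R) (_ : Pr.IsPrime), ¬B ≤ Pr →
      Subsingleton (LocalizedModule Pr.primeCompl
        ((P.complex.linearYonedaObj R Y).homology j))
  have vanR : Van ℓ (ModuleCat.of R R) := by
    intro Pr hPr hB
    exact locSub_of_iso _ (P.isoExt ℓ (ModuleCat.of R R)) (hS Pr hB)
  have vanL : ∀ (L : Type) (_ : AddCommGroup L) (_ : Module R L) (_ : Module.Finite R L),
      Van (ℓ + 1) (ModuleCat.of R L) := by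
    intro L _ _ _ Pr hPr hB
    exact locSub_of_iso _ (P.isoExt (ℓ + 1) (ModuleCat.of R L)) (hL L Pr hB)
  -- cyclic modules
  have vanCyc : ∀ (Z : Type) (_ : AddCommGroup Z) (_ : Module R Z) (x : Z),
      Submodule.span R {x} = ⊤ → Van ℓ (ModuleCat.of R Z) := by
    intro Z _ _ x hx
    set φ : R →ₗ[R] Z := LinearMap.toSpanSingleton R Z x with hφ
    have hsurj : Function.Surjective φ := by
      rw [← LinearMap.range_eq_top, ← LinearMap.span_singleton_eq_range]
      exact hx
    set K := LinearMap.ker φ with hK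
    let S' : ShortComplex (ModuleCat R) :=
      ShortComplex.mk (ModuleCat.ofHom K.subtype) (ModuleCat.ofHom φ) (by
        ext a
        exact a.2)
    haveI : Mono S'.f := by
      rw [ModuleCat.mono_iff_injective]
      exact K.injective_subtype
    haveI : Epi S'.g := by
      rw [ModuleCat.epi_iff_surjective]
      exact hsurj
    have hS' : S'.ShortExact := by
      refine ShortComplex.ShortExact.mk ?_
      rw [ShortComplex.moduleCat_exact_iff]
      intro a ha
      exact ⟨⟨a, ha⟩, rfl⟩
    haveI : Module.Finite R K :=
      Module.Finite.iff_fg.mpr (IsNoetherian.noetherian K)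
    intro Pr hPr hB
    have hex3 := (sigmaC_shortExact P.complex S' hS').homology_exact₃ ℓ (ℓ + 1) (by simp)
    exact locSub_of_exact _ _ hex3 (vanR Pr hPr hB)
      (vanL K inferInstance inferInstance inferInstance Pr hPr hB)
  -- induction on the number of generators
  have vanInd : ∀ (m : ℕ) (Y : Type) (_ : AddCommGroup Y) (_ : Module R Y) (s : Finset Y),
      s.card ≤ m → Submodule.span R (↑s : Set Y) = ⊤ → Van ℓ (ModuleCat.of R Y) := by
    intro m
    induction m with
    | zero =>
      intro Y _ _ s hcard hspan
      have hempty : s = ∅ := Finset.card_eq_zero.1 (Nat.le_zero.1 hcard)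
      subst hempty
      rw [Finset.coe_empty, Submodule.span_empty] at hspan
      haveI hsub : Subsingleton Y := by
        refine ⟨fun a b => ?_⟩
        have ha : a ∈ (⊥ : Submodule R Y) := hspan.ge Submodule.mem_top
        have hb : b ∈ (⊥ : Submodule R Y) := hspan.ge Submodule.mem_top
        rw [Submodule.mem_bot] at ha hb
        rw [ha, hb]
      intro Pr hPr hB
      apply locSub_of_subsingleton
      haveI hYsub : Subsingleton ↑(ModuleCat.of R Y) := hsub
      have homsub : ∀ (f g : P.complex.X ℓ ⟶ ModuleCat.of R Y), f = g := fun f g =>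
        ModuleCat.hom_ext (LinearMap.ext fun u => Subsingleton.elim _ _)
      haveI : Subsingleton ↑((P.complex.linearYonedaObj R (ModuleCat.of R Y)).X ℓ) :=
        ⟨fun f g => homsub f g⟩
      have hz : IsZero ((P.complex.linearYonedaObj R (ModuleCat.of R Y)).X ℓ) :=
        ModuleCat.isZero_of_subsingleton _
      have hexℓ : (P.complex.linearYonedaObj R (ModuleCat.of R Y)).ExactAt ℓ := by
        rw [HomologicalComplex.exactAt_iff]
        exact ShortComplex.exact_of_isZero_X₂ _ hz
      have hzh := (HomologicalComplex.exactAt_iff_isZero_homology _ _).1 hexℓ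
      have hzero : ∀ (c : ↑((P.complex.linearYonedaObj R (ModuleCat.of R Y)).homology ℓ)),
          c = 0 := by
        intro c
        have h1 : (𝟙 ((P.complex.linearYonedaObj R (ModuleCat.of R Y)).homology ℓ)) =
            (0 : ((P.complex.linearYonedaObj R (ModuleCat.of R Y)).homology ℓ) ⟶
              ((P.complex.linearYonedaObj R (ModuleCat.of R Y)).homology ℓ)) :=
          hzh.eq_of_src _ _
        have h2 := congrArg
          (fun f : ((P.complex.linearYonedaObj R (ModuleCat.of R Y)).homology ℓ) ⟶
            ((P.complex.linearYonedaObj R (ModuleCat.of R Y)).homology ℓ) => f c) h1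
        simpa using h2
      exact ⟨fun a b => by rw [hzero a, hzero b]⟩
    | succ m IH =>
      intro Y _ _ s hcard hspan
      rcases s.eq_empty_or_nonempty with rfl | ⟨x, hx⟩
      · exact IH Y inferInstance inferInstance ∅ (Nat.zero_le m) hspan
      · set A : Submodule R Y := Submodule.span R (↑(s.erase x) : Set Y) with hA
        -- the submodule is generated by ≤ m elements
        have vA : Van ℓ (ModuleCat.of R A) := by
          refine IH A inferInstance inferInstance
            ((s.erase x).attach.image
              (fun y => (⟨y.1, Submodule.subset_span y.2⟩ : A))) ?_ ?_
          · calc _ ≤ (s.erase x).attach.card := Finset.card_image_le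
              _ = (s.erase x).card := Finset.card_attach
              _ = s.card - 1 := by rw [Finset.card_erase_of_mem hx]
              _ ≤ m := by omega
          · apply Submodule.map_injective_of_injective A.injective_subtype
            rw [Submodule.map_span, Submodule.map_top, Submodule.range_subtype]
            have himg : A.subtype '' (↑((s.erase x).attach.image
                (fun y => (⟨y.1, Submodule.subset_span y.2⟩ : A))) : Set A)
                = (↑(s.erase x) : Set Y) := by
              ext z
              constructor
              · rintro ⟨w, hw, rfl⟩
                simp only [Finset.coe_image, Set.mem_image, Finset.mem_coe] at hw
                obtain ⟨v, _, rfl⟩ := hw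
                exact v.2
              · intro hz
                refine ⟨⟨z, Submodule.subset_span hz⟩, ?_, rfl⟩
                simp only [Finset.coe_image, Set.mem_image, Finset.mem_coe]
                exact ⟨⟨z, hz⟩, Finset.mem_attach _ _, rfl⟩
            rw [himg]
        -- the quotient is cyclic
        have vQ : Van ℓ (ModuleCat.of R (Y ⧸ A)) := by
          refine vanCyc (Y ⧸ A) inferInstance inferInstance (A.mkQ x) ?_
          rw [eq_top_iff]
          rintro q -
          obtain ⟨y, rfl⟩ := A.mkQ_surjective q
          have hy : y ∈ Submodule.span R (↑s : Set Y) := hspan.ge Submodule.mem_top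
          have hle : Submodule.span R (↑s : Set Y) ≤
              (Submodule.span R {A.mkQ x}).comap A.mkQ := by
            rw [Submodule.span_le]
            intro z hz
            rcases eq_or_ne z x with rfl | hne
            · exact Submodule.subset_span rfl
            · have hzA : z ∈ A := Submodule.subset_span (Finset.mem_erase.2 ⟨hne, hz⟩)
              have : A.mkQ z = 0 := by
                rw [Submodule.mkQ_apply, Submodule.Quotient.mk_eq_zero]
                exact hzA
              show z ∈ Submodule.comap A.mkQ (Submodule.span R {A.mkQ x})
              rw [Submodule.mem_comap, this]
              exact Submodule.zero_mem _
          exact hle hy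
        -- the short exact sequence A → Y → Y/A
        let S' : ShortComplex (ModuleCat R) :=
          ShortComplex.mk (ModuleCat.ofHom A.subtype) (ModuleCat.ofHom A.mkQ) (by
            ext a
            show A.mkQ (A.subtype a) = 0
            rw [Submodule.subtype_apply, Submodule.mkQ_apply, Submodule.Quotient.mk_eq_zero]
            exact a.2)
        haveI : Mono S'.f := by
          rw [ModuleCat.mono_iff_injective]
          exact A.injective_subtype
        haveI : Epi S'.g := by
          rw [ModuleCat.epi_iff_surjective]
          exact A.mkQ_surjective
        have hS' : S'.ShortExact := by
          refine ShortComplex.ShortExact.mk ?_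
          rw [ShortComplex.moduleCat_exact_iff]
          intro a ha
          have haA : a ∈ A := by
            rwa [show S'.g a = A.mkQ a from rfl, Submodule.mkQ_apply,
              Submodule.Quotient.mk_eq_zero] at ha
          exact ⟨⟨a, haA⟩, rfl⟩
        intro Pr hPr hB
        have hex2 := (sigmaC_shortExact P.complex S' hS').homology_exact₂ ℓ
        exact locSub_of_exact _ _ hex2 (vA Pr hPr hB) (vQ Pr hPr hB)
  -- conclude
  intro N _ _ _ Pr hPr hB
  obtain ⟨s, hs⟩ := Module.Finite.fg_top (R := R) (M := N)
  have := vanInd s.card N inferInstance inferInstance s le_rfl hs Pr hPr hB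
  exact locSub_of_iso _ (P.isoExt ℓ (ModuleCat.of R N)).symm this


/-- Corollary 4.4: let `M` be a finitely generated module over
`S = k[x₁,…,xₙ]` and `ℓ ≥ 0`.  If `Ext^ℓ_S(M, S)` localizes to zero at every relevant
prime (prime not containing the irrelevant ideal `B`), and `Ext^{ℓ+1}_S(M, L)` localizes
to zero at every relevant prime for every finitely generated `S`-module `L`, then
`Ext^ℓ_S(M, N)` localizes to zero at every relevant prime for every finitely generated
`S`-module `N`. -/
theorem ext_localization_vanishes_inductive_step
    {k : Type} [Field k] {n : ℕ}
    (B : Ideal (PolyRing k n))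
    (M : Type) [AddCommGroup M] [Module (PolyRing k n) M]
    [Module.Finite (PolyRing k n) M]
    (ℓ : ℕ)
    (hS : ∀ (P : Ideal (PolyRing k n)) [P.IsPrime], ¬B ≤ P →
      Subsingleton (LocalizedModule P.primeCompl
        (((Ext (PolyRing k n) (ModuleCat (PolyRing k n)) ℓ).obj
          (Opposite.op (ModuleCat.of (PolyRing k n) M))).obj
            (ModuleCat.of (PolyRing k n) (PolyRing k n)))))
    (hL : ∀ (L : Type) [AddCommGroup L] [Module (PolyRing k n) L]
      [Module.Finite (PolyRing k n) L],
      ∀ (P : Ideal (PolyRing k n)) [P.IsPrime], ¬B ≤ P →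
        Subsingleton (LocalizedModule P.primeCompl
          (((Ext (PolyRing k n) (ModuleCat (PolyRing k n)) (ℓ + 1)).obj
            (Opposite.op (ModuleCat.of (PolyRing k n) M))).obj
              (ModuleCat.of (PolyRing k n) L)))) :
    ∀ (N : Type) [AddCommGroup N] [Module (PolyRing k n) N]
      [Module.Finite (PolyRing k n) N],
      ∀ (P : Ideal (PolyRing k n)) [P.IsPrime], ¬B ≤ P →
        Subsingleton (LocalizedModule P.primeCompl
          (((Ext (PolyRing k n) (ModuleCat (PolyRing k n)) ℓ).obj
            (Opposite.op (ModuleCat.of (PolyRing k n) M))).obj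
              (ModuleCat.of (PolyRing k n) N))) := by
  haveI : IsNoetherianRing (PolyRing k n) := inferInstance
  exact general_ext_step B M ℓ hS hL
end
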